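/- arXiv:0805.4597 — 9 statements merged into one kernel-verified Lean document; each statement's English description precedes it below -/
import Mathlib

section
/- Let h : X × X* → ℝ∪{+∞} be a convex function. Then h satisfies h(x,x*) ≥ ⟨x,x*⟩ for all (x,x*) ∈ X × X* together with h*(x*,x**) ≥ ⟨x*,x**⟩ for all (x*,x**) ∈ X* × X** if, and only if, for every (x₀,x₀*) ∈ X × X* one has inf_{(x,x*)∈X×X*} ( h_{(x₀,x₀*)}(x,x*) + ½‖x‖² + ½‖x*‖² ) = 0. -/
/-
The two pairing inequalities are invariant under the translations `h ↦ h_{(x₀,x₀*)}`: the translate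
of a function above the pairing is again above it, and `(h_{(x₀,x₀*)})*` is a translate of `h*`. So
it suffices to treat `(x₀,x₀*) = 0`. Since `|⟨x,x*⟩| ≤ ½‖x‖² + ½‖x*‖²`, the infimum is `≥ 0`
whenever `h` is above the pairing. If it were `> μ > 0`, the sandwich theorem would put a continuous
affine function `(x,x*) ↦ ⟨x,y*⟩ + ⟨x*,y**⟩ + c` between the concave `μ - ½‖x‖² - ½‖x*‖²` and `h`;
the first bound forces `c ≥ μ + ½‖y*‖² + ½‖y**‖²`, the second `c ≤ -h*(y*,y**) ≤ -⟨y*,y**⟩`, which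
contradict each other because `|⟨y*,y**⟩| ≤ ½‖y*‖² + ½‖y**‖²`. Conversely, evaluating the infimum at
`0` gives `h ≥ ⟨·,·⟩`, and `inf (g + ½‖·‖² + ½‖·‖²) ≤ 0` bounds `g*` from below by `-½‖·‖² - ½‖·‖²`;
applied to the translates `h_{(0,x₀*)}` and optimised over `x₀*` this yields `h* ≥ ⟨·,·⟩`.
-/

noncomputable section

open NormedSpace

/-- The translate `h_{(x₀,x₀*)}` of a function on `X × X*`. -/
def transl {X : Type*} [NormedAddCommGroup X] [NormedSpace ℝ X]
    (h : X × (X →L[ℝ] ℝ) → EReal) (w : X × (X →L[ℝ] ℝ)) :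
    X × (X →L[ℝ] ℝ) → EReal :=
  fun p => h (p.1 + w.1, p.2 + w.2) - ((w.2 p.1 + p.2 w.1 + w.2 w.1 : ℝ) : EReal)

/-- The translate of a function on `X* × X**`. -/
def translD {X : Type*} [NormedAddCommGroup X] [NormedSpace ℝ X]
    (g : (X →L[ℝ] ℝ) × ((X →L[ℝ] ℝ) →L[ℝ] ℝ) → EReal)
    (v : (X →L[ℝ] ℝ) × ((X →L[ℝ] ℝ) →L[ℝ] ℝ)) :
    (X →L[ℝ] ℝ) × ((X →L[ℝ] ℝ) →L[ℝ] ℝ) → EReal :=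
  fun q => g (q.1 + v.1, q.2 + v.2) - ((v.2 q.1 + q.2 v.1 + v.2 v.1 : ℝ) : EReal)

/-- The conjugate `h* : X* × X** → ℝ ∪ {±∞}`,
`h*(x*,x**) = sup_{(y,y*)} ⟨y,x*⟩ + ⟨y*,x**⟩ − h(y,y*)`. -/
def conj {X : Type*} [NormedAddCommGroup X] [NormedSpace ℝ X]
    (h : X × (X →L[ℝ] ℝ) → EReal) :
    (X →L[ℝ] ℝ) × ((X →L[ℝ] ℝ) →L[ℝ] ℝ) → EReal :=
  fun q => ⨆ p : X × (X →L[ℝ] ℝ), (((q.1 p.1 + q.2 p.2 : ℝ) : EReal) - h p)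

/-- Convexity of an `EReal`-valued function. -/
def ConvexE {X : Type*} [NormedAddCommGroup X] [NormedSpace ℝ X]
    (h : X × (X →L[ℝ] ℝ) → EReal) : Prop :=
  ∀ p q : X × (X →L[ℝ] ℝ), ∀ a b : ℝ, 0 ≤ a → 0 ≤ b → a + b = 1 →
    h (a • p + b • q) ≤ (a : EReal) * h p + (b : EReal) * h q

/-- The auxiliary condition:
`inf_{(x,x*)} h_{(x₀,x₀*)}(x,x*) + ½‖x‖² + ½‖x*‖² = 0` for all `(x₀,x₀*)`. -/
def AuxCond {X : Type*} [NormedAddCommGroup X] [NormedSpace ℝ X]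
    (h : X × (X →L[ℝ] ℝ) → EReal) : Prop :=
  ∀ w : X × (X →L[ℝ] ℝ),
    (⨅ p : X × (X →L[ℝ] ℝ),
      (transl h w p + ((‖p.1‖ ^ 2 / 2 + ‖p.2‖ ^ 2 / 2 : ℝ) : EReal))) = 0

/-- Monotone operator (identified with its graph). -/
def MonotoneSet {X : Type*} [NormedAddCommGroup X] [NormedSpace ℝ X]
    (T : Set (X × (X →L[ℝ] ℝ))) : Prop :=
  ∀ p ∈ T, ∀ q ∈ T, 0 ≤ (p.2 - q.2) (p.1 - q.1)

/-- Maximal monotone operator. -/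
def MaximalMonotone {X : Type*} [NormedAddCommGroup X] [NormedSpace ℝ X]
    (T : Set (X × (X →L[ℝ] ℝ))) : Prop :=
  MonotoneSet T ∧ ∀ S : Set (X × (X →L[ℝ] ℝ)), MonotoneSet S → T ⊆ S → S = T

/-- The Fitzpatrick family of `T`. -/
def FitzFamily {X : Type*} [NormedAddCommGroup X] [NormedSpace ℝ X]
    (T : Set (X × (X →L[ℝ] ℝ))) : Set (X × (X →L[ℝ] ℝ) → EReal) :=
  {h | ConvexE h ∧ LowerSemicontinuous h ∧
      (∀ p : X × (X →L[ℝ] ℝ), (p.2 p.1 : EReal) ≤ h p) ∧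
      ∀ p ∈ T, h p = (p.2 p.1 : EReal)}

/-- `T` is of type (NI): `inf_{(y,y*)∈T} ⟨x*−y*, x**−Jy⟩ ≤ 0` for all `(x*,x**)`. -/
def TypeNI {X : Type*} [NormedAddCommGroup X] [NormedSpace ℝ X]
    (T : Set (X × (X →L[ℝ] ℝ))) : Prop :=
  ∀ q : (X →L[ℝ] ℝ) × ((X →L[ℝ] ℝ) →L[ℝ] ℝ),
    (⨅ p : T, (((q.2 - inclusionInDoubleDual ℝ X p.1.1) (q.1 - p.1.2) : ℝ) : EReal)) ≤ 0

theorem EReal.iSup_sub_coe {ι : Sort*} (f : ι → EReal) (c : ℝ) :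
    (⨆ i, f i) - c = ⨆ i, (f i - c) := by
  have hc {a b : EReal} : a - c ≤ b ↔ a ≤ b + c :=
    EReal.sub_le_iff_le_add (.inl (EReal.coe_ne_bot c)) (.inl (EReal.coe_ne_top c))
  refine le_antisymm (hc.2 (iSup_le fun i => hc.1 (le_iSup (fun i => f i - c) i)))
    (iSup_le fun i => EReal.sub_le_sub (le_iSup f i) le_rfl)

theorem EReal.coe_sub_sub_coe_eq_coe_add_sub (a b : ℝ) (x : EReal) :
    (a : EReal) - (x - b) = ((a + b : ℝ) : EReal) - x := by
  induction x with
  | bot => simp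
  | top => simp
  | coe x => simp only [← EReal.coe_sub]; ring_nf

theorem EReal.coe_sub_sub_coe_eq_coe_sub_sub (a b : ℝ) (x : EReal) :
    (a : EReal) - x - b = ((a - b : ℝ) : EReal) - x := by
  induction x with
  | bot => simp [-EReal.coe_sub]
  | top => simp
  | coe x => simp only [← EReal.coe_sub]; ring_nf

def epi {E : Type*} (f : E → EReal) : Set (E × ℝ) := {z | f z.1 ≤ z.2}

theorem convexOn_univ_half_sq_norm {E : Type*} [NormedAddCommGroup E] [NormedSpace ℝ E] :
    ConvexOn ℝ Set.univ fun x : E => ‖x‖ ^ 2 / 2 := by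
  simpa [div_eq_inv_mul] using
    (convexOn_univ_norm.pow (fun _ _ => norm_nonneg _) 2).smul (by norm_num : (0 : ℝ) ≤ 2⁻¹)

theorem convexOn_univ_half_sq_norm_add_half_sq_norm {E F : Type*} [NormedAddCommGroup E]
    [NormedSpace ℝ E] [NormedAddCommGroup F] [NormedSpace ℝ F] :
    ConvexOn ℝ Set.univ fun p : E × F => ‖p.1‖ ^ 2 / 2 + ‖p.2‖ ^ 2 / 2 :=
  (convexOn_univ_half_sq_norm.comp_linearMap (LinearMap.fst ℝ E F)).add
    (convexOn_univ_half_sq_norm.comp_linearMap (LinearMap.snd ℝ E F))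

namespace ContinuousLinearMap

variable {E : Type*} [NormedAddCommGroup E] [NormedSpace ℝ E] (φ : E →L[ℝ] ℝ)

theorem abs_apply_le_half_sq_norm_add_half_sq_norm (u : E) :
    |φ u| ≤ ‖φ‖ ^ 2 / 2 + ‖u‖ ^ 2 / 2 := by
  have := φ.le_opNorm u
  rw [Real.norm_eq_abs] at this
  nlinarith [sq_nonneg (‖φ‖ - ‖u‖)]

theorem exists_lt_apply_sub_half_sq_norm (ε : ℝ) (hε : 0 < ε) :
    ∃ u : E, ‖φ‖ ^ 2 / 2 - ε < φ u - ‖u‖ ^ 2 / 2 := by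
  set η := ε / (‖φ‖ + 1)
  have hη : ‖φ‖ * η < ε := by
    rw [mul_div_assoc', div_lt_iff₀ (by positivity)]
    nlinarith [norm_nonneg φ]
  obtain ⟨x, hx, hφx⟩ := φ.exists_lt_apply_of_lt_opNorm (sub_lt_self ‖φ‖ (by positivity : 0 < η))
  rw [Real.norm_eq_abs, lt_abs] at hφx
  obtain ⟨y, hy, hφy⟩ : ∃ y, ‖y‖ < 1 ∧ ‖φ‖ - η < φ y :=
    hφx.elim (fun h => ⟨x, hx, h⟩) (fun h => ⟨-x, by simpa using hx, by simpa using h⟩)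
  refine ⟨‖φ‖ • y, ?_⟩
  rw [map_smul, smul_eq_mul, norm_smul, norm_norm, mul_pow]
  have : ‖y‖ ^ 2 ≤ 1 := by nlinarith [norm_nonneg y]
  nlinarith [mul_le_mul_of_nonneg_left hφy.le (norm_nonneg φ), sq_nonneg ‖φ‖]

end ContinuousLinearMap

theorem exists_continuousLinearMap_add_const_between {E : Type*} [TopologicalSpace E]
    [AddCommGroup E] [IsTopologicalAddGroup E] [Module ℝ E] [ContinuousSMul ℝ E]
    {F : E → EReal} {G : E → ℝ} (hF : Convex ℝ (epi F)) (hFne : (epi F).Nonempty)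
    (hG : ConcaveOn ℝ Set.univ G) (hGc : Continuous G) (hGF : ∀ p, (G p : EReal) ≤ F p) :
    ∃ (Φ : E →L[ℝ] ℝ) (c : ℝ), (∀ p, G p ≤ Φ p + c) ∧ ∀ p, ((Φ p + c : ℝ) : EReal) ≤ F p := by
  set A : Set (E × ℝ) := {z | z.1 ∈ Set.univ ∧ z.2 < G z.1}
  have hAopen : IsOpen A := by
    simpa [A] using isOpen_lt continuous_snd (hGc.comp continuous_fst)
  have hdisj : Disjoint A (epi F) := by
    refine Set.disjoint_left.2 fun z hzA hzB => (hGF z.1).not_gt ?_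
    exact lt_of_le_of_lt hzB (EReal.coe_lt_coe_iff.2 hzA.2)
  obtain ⟨f, u, hfA, hfB⟩ := geometric_hahn_banach_open hG.convex_strict_hypograph hAopen hF hdisj
  set q := f.comp (ContinuousLinearMap.inl ℝ E ℝ)
  set r := f (0, 1)
  have hf : ∀ p t, f (p, t) = q p + t * r := fun p t => by
    rw [show ((p, t) : E × ℝ) = (p, 0) + t • (0, 1) by simp, map_add, map_smul, smul_eq_mul]
    rfl
  obtain ⟨⟨p₀, t₀⟩, hp₀⟩ := hFne
  -- The separating hyperplane is not vertical: on the vertical line through a point of the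
  -- epigraph, `f` is smaller at a point of the hypograph below it.
  have hr : 0 < r := by
    set s := min (G p₀ - 1) (t₀ - 1)
    have hst : s < t₀ := (min_le_right _ _).trans_lt (sub_one_lt t₀)
    have hs : f (p₀, s) < f (p₀, t₀) :=
      (hfA _ ⟨trivial, (min_le_left _ _).trans_lt (sub_one_lt _)⟩).trans_le (hfB _ hp₀)
    rw [hf, hf] at hs
    nlinarith
  have hval : ∀ p, ((-r⁻¹ • q) p + u / r) * r = u - q p := fun p => by
    simp only [FunLike.coe_smul, Pi.smul_apply, smul_eq_mul]
    field_simp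
    ring
  refine ⟨-r⁻¹ • q, u / r, fun p => ?_, fun p => ?_⟩
  · by_contra! hlt
    have := hfA (p, _) ⟨trivial, hlt⟩
    rw [hf, hval] at this
    linarith
  · refine EReal.le_of_forall_lt_iff_le.1 fun t ht => ?_
    have := hfB (p, t) ht.le
    rw [hf] at this
    refine EReal.coe_le_coe_iff.2 (le_of_mul_le_mul_right ?_ hr)
    linarith [hval p]

section

variable {X : Type*} [NormedAddCommGroup X] [NormedSpace ℝ X] {h : X × (X →L[ℝ] ℝ) → EReal}

theorem ConvexE.convex_epi (hh : ConvexE h) : Convex ℝ (epi h) := by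
  rintro ⟨p, s⟩ hp ⟨q, t⟩ hq a b ha hb hab
  calc h (a • p + b • q) ≤ a * h p + b * h q := hh p q a b ha hb hab
    _ ≤ a * s + b * t := add_le_add (mul_le_mul_of_nonneg_left hp (EReal.coe_nonneg.2 ha))
        (mul_le_mul_of_nonneg_left hq (EReal.coe_nonneg.2 hb))
    _ = ((a • (p, s) + b • (q, t)).2 : ℝ) := by simp

theorem transl_apply (w p : X × (X →L[ℝ] ℝ)) :
    transl h w p = h (p + w) - ((w.2 p.1 + p.2 w.1 + w.2 w.1 : ℝ) : EReal) :=
  rfl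

theorem mem_epi_transl {w : X × (X →L[ℝ] ℝ)} {z : (X × (X →L[ℝ] ℝ)) × ℝ} :
    z ∈ epi (transl h w) ↔ (z.1 + w, z.2 + (w.2 z.1.1 + z.1.2 w.1 + w.2 w.1)) ∈ epi h := by
  simp only [epi, Set.mem_ofPred_eq, transl_apply]
  rw [EReal.sub_le_iff_le_add (.inl (EReal.coe_ne_bot _)) (.inl (EReal.coe_ne_top _)),
    ← EReal.coe_add]

theorem Convex.epi_transl (hh : Convex ℝ (epi h)) (w : X × (X →L[ℝ] ℝ)) :
    Convex ℝ (epi (transl h w)) := by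
  intro z hz z' hz' a b ha hb hab
  rw [mem_epi_transl] at *
  convert hh hz hz' ha hb hab using 1
  obtain rfl : b = 1 - a := by linarith
  refine Prod.ext ?_ ?_
  · simp only [Prod.fst_add, Prod.smul_fst]
    module
  · simp only [Prod.fst_add, Prod.snd_add, Prod.smul_fst, Prod.smul_snd, map_add, map_smul,
      add_apply, FunLike.coe_smul, Pi.smul_apply, smul_eq_mul]
    ring

theorem pairing_le_transl (hh : ∀ p : X × (X →L[ℝ] ℝ), (p.2 p.1 : EReal) ≤ h p)
    (w p : X × (X →L[ℝ] ℝ)) : (p.2 p.1 : EReal) ≤ transl h w p := by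
  rw [transl_apply, EReal.le_sub_iff_add_le (.inl (EReal.coe_ne_bot _))
    (.inl (EReal.coe_ne_top _)), ← EReal.coe_add]
  convert hh (p + w) using 2
  simp only [Prod.fst_add, Prod.snd_add, map_add, add_apply]
  ring

theorem pairing_le_translD {g : (X →L[ℝ] ℝ) × ((X →L[ℝ] ℝ) →L[ℝ] ℝ) → EReal}
    (hg : ∀ q : (X →L[ℝ] ℝ) × ((X →L[ℝ] ℝ) →L[ℝ] ℝ), (q.2 q.1 : EReal) ≤ g q)
    (v q : (X →L[ℝ] ℝ) × ((X →L[ℝ] ℝ) →L[ℝ] ℝ)) : (q.2 q.1 : EReal) ≤ translD g v q := by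
  rw [translD, EReal.le_sub_iff_add_le (.inl (EReal.coe_ne_bot _)) (.inl (EReal.coe_ne_top _)),
    ← EReal.coe_add]
  convert hg (q + v) using 2
  · simp only [Prod.fst_add, Prod.snd_add, map_add, add_apply]
    ring
  · rfl

theorem conj_transl (w : X × (X →L[ℝ] ℝ)) :
    conj (transl h w) = translD (conj h) (w.2, inclusionInDoubleDual ℝ X w.1) := by
  ext q
  rw [conj, translD, conj, EReal.iSup_sub_coe, ← (Equiv.subRight w).iSup_comp]
  refine iSup_congr fun s => ?_
  simp only [Equiv.subRight_apply, transl_apply, sub_add_cancel,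
    EReal.coe_sub_sub_coe_eq_coe_add_sub, EReal.coe_sub_sub_coe_eq_coe_sub_sub]
  congr 2
  simp only [Prod.fst_sub, Prod.snd_sub, map_sub, sub_apply, add_apply, dual_def]
  ring

theorem nonempty_epi_of_nonneg_conj_zero {g : X × (X →L[ℝ] ℝ) → EReal} (h0 : 0 ≤ conj g 0) :
    (epi g).Nonempty := by
  obtain ⟨p, hp⟩ := lt_iSup_iff.1 ((EReal.coe_lt_coe_iff.2 neg_one_lt_zero).trans_le h0)
  simp only [EReal.coe_neg, EReal.coe_one, Prod.fst_zero, zero_apply, Prod.snd_zero, add_zero,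
    EReal.coe_zero, zero_sub, EReal.neg_lt_neg_iff] at hp
  exact ⟨(p, 1), by simpa [epi] using hp.le⟩

theorem iInf_add_half_sq_norm_eq_zero {g : X × (X →L[ℝ] ℝ) → EReal} (hg : Convex ℝ (epi g))
    (hπ : ∀ p : X × (X →L[ℝ] ℝ), (p.2 p.1 : EReal) ≤ g p)
    (hπ' : ∀ q : (X →L[ℝ] ℝ) × ((X →L[ℝ] ℝ) →L[ℝ] ℝ), (q.2 q.1 : EReal) ≤ conj g q) :
    ⨅ p : X × (X →L[ℝ] ℝ), (g p + ((‖p.1‖ ^ 2 / 2 + ‖p.2‖ ^ 2 / 2 : ℝ) : EReal)) = 0 := by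
  have hnonneg (p : X × (X →L[ℝ] ℝ)) :
      (0 : EReal) ≤ g p + ((‖p.1‖ ^ 2 / 2 + ‖p.2‖ ^ 2 / 2 : ℝ) : EReal) :=
    calc (0 : EReal) ≤ ((p.2 p.1 + (‖p.1‖ ^ 2 / 2 + ‖p.2‖ ^ 2 / 2) : ℝ) : EReal) := by
          have := p.2.abs_apply_le_half_sq_norm_add_half_sq_norm p.1
          exact_mod_cast (by linarith [neg_abs_le (p.2 p.1)])
      _ ≤ _ := by rw [EReal.coe_add]; exact add_le_add_left (hπ p) _
  refine le_antisymm ?_ (le_iInf hnonneg)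
  refine EReal.le_of_forall_lt_iff_le.1 fun μ hμ => ?_
  by_contra! hlt
  have hμ : 0 < μ := by exact_mod_cast hμ
  have hGF : ∀ p, ((μ - (‖p.1‖ ^ 2 / 2 + ‖p.2‖ ^ 2 / 2) : ℝ) : EReal) ≤ g p := fun p => by
    rw [EReal.coe_sub, EReal.sub_le_iff_le_add (.inl (EReal.coe_ne_bot _))
      (.inl (EReal.coe_ne_top _))]
    exact hlt.le.trans (iInf_le _ p)
  obtain ⟨Φ, c, hlow, hup⟩ := exists_continuousLinearMap_add_const_between hg
    (nonempty_epi_of_nonneg_conj_zero (hπ' 0))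
    ((concaveOn_const μ convex_univ).sub convexOn_univ_half_sq_norm_add_half_sq_norm)
    (by fun_prop) hGF
  set q₁ := Φ.comp (ContinuousLinearMap.inl ℝ X (X →L[ℝ] ℝ))
  set q₂ := Φ.comp (ContinuousLinearMap.inr ℝ X (X →L[ℝ] ℝ))
  have hΦ : ∀ p : X × (X →L[ℝ] ℝ), Φ p = q₁ p.1 + q₂ p.2 := fun p =>
    (Φ.comp_inl_add_comp_inr p).symm
  have hconj : conj g (q₁, q₂) ≤ ((-c : ℝ) : EReal) := iSup_le fun p => by
    rw [EReal.sub_le_iff_le_add (.inr (EReal.coe_ne_top _)) (.inr (EReal.coe_ne_bot _))]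
    calc ((q₁ p.1 + q₂ p.2 : ℝ) : EReal) = ((-c : ℝ) : EReal) + ((Φ p + c : ℝ) : EReal) := by
          rw [← EReal.coe_add, hΦ]; ring_nf
      _ ≤ _ := add_le_add le_rfl (hup p)
  have hc : q₂ q₁ ≤ -c := by exact_mod_cast (hπ' (q₁, q₂)).trans hconj
  obtain ⟨x, hx⟩ := (-q₁).exists_lt_apply_sub_half_sq_norm (μ / 4) (by positivity)
  obtain ⟨y, hy⟩ := (-q₂).exists_lt_apply_sub_half_sq_norm (μ / 4) (by positivity)
  have := hlow (x, y)
  simp only [norm_neg, neg_apply, Pi.sub_apply, hΦ] at hx hy this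
  linarith [q₂.abs_apply_le_half_sq_norm_add_half_sq_norm q₁, neg_abs_le (q₂ q₁)]


theorem neg_half_sq_norm_le_conj {g : X × (X →L[ℝ] ℝ) → EReal}
    (hg : ⨅ p : X × (X →L[ℝ] ℝ), (g p + ((‖p.1‖ ^ 2 / 2 + ‖p.2‖ ^ 2 / 2 : ℝ) : EReal)) ≤ 0)
    (q : (X →L[ℝ] ℝ) × ((X →L[ℝ] ℝ) →L[ℝ] ℝ)) :
    ((-(‖q.1‖ ^ 2 / 2 + ‖q.2‖ ^ 2 / 2) : ℝ) : EReal) ≤ conj g q := by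
  refine EReal.ge_of_forall_gt_iff_ge.1 fun z hz => ?_
  have hz : z < -(‖q.1‖ ^ 2 / 2 + ‖q.2‖ ^ 2 / 2) := by exact_mod_cast hz
  set ε := -(‖q.1‖ ^ 2 / 2 + ‖q.2‖ ^ 2 / 2) - z with hε
  obtain ⟨p, hp⟩ := iInf_lt_iff.1 (hg.trans_lt (EReal.coe_pos.2 (sub_pos.2 hz) : (0 : EReal) < ε))
  have hgp : g p < ((ε - (‖p.1‖ ^ 2 / 2 + ‖p.2‖ ^ 2 / 2) : ℝ) : EReal) := by
    rwa [EReal.coe_sub, EReal.lt_sub_iff_add_lt (.inl (EReal.coe_ne_bot _))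
      (.inl (EReal.coe_ne_top _))]
  calc (z : EReal)
      ≤ ((q.1 p.1 + q.2 p.2 : ℝ) : EReal) -
          ((ε - (‖p.1‖ ^ 2 / 2 + ‖p.2‖ ^ 2 / 2) : ℝ) : EReal) := by
        rw [← EReal.coe_sub]
        have h₁ := q.1.abs_apply_le_half_sq_norm_add_half_sq_norm p.1
        have h₂ := q.2.abs_apply_le_half_sq_norm_add_half_sq_norm p.2
        exact_mod_cast (by linarith [neg_abs_le (q.1 p.1), neg_abs_le (q.2 p.2)])
    _ ≤ ((q.1 p.1 + q.2 p.2 : ℝ) : EReal) - g p := EReal.sub_le_sub le_rfl hgp.le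
    _ ≤ conj g q := le_iSup (fun p => ((q.1 p.1 + q.2 p.2 : ℝ) : EReal) - g p) p

theorem AuxCond.pairing_le (haux : AuxCond h) (p : X × (X →L[ℝ] ℝ)) :
    (p.2 p.1 : EReal) ≤ h p := by
  have h0 := (haux p).symm.le.trans (iInf_le _ 0)
  simpa [transl_apply, EReal.le_sub_iff_add_le (.inl (EReal.coe_ne_bot _))
    (.inl (EReal.coe_ne_top _))] using h0

theorem AuxCond.pairing_le_conj (haux : AuxCond h) (q : (X →L[ℝ] ℝ) × ((X →L[ℝ] ℝ) →L[ℝ] ℝ)) :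
    (q.2 q.1 : EReal) ≤ conj h q := by
  refine EReal.ge_of_forall_gt_iff_ge.1 fun z hz => ?_
  have hz : z < q.2 q.1 := by exact_mod_cast hz
  obtain ⟨u, hu⟩ := q.2.exists_lt_apply_sub_half_sq_norm (q.2 q.1 - z) (sub_pos.2 hz)
  have := neg_half_sq_norm_le_conj (haux (0, u + q.1)).le (-u, q.2)
  rw [conj_transl, translD, EReal.le_sub_iff_add_le (.inl (EReal.coe_ne_bot _))
    (.inl (EReal.coe_ne_top _)), ← EReal.coe_add] at this
  simp only [norm_neg, map_zero, zero_apply, zero_add, neg_add_cancel_left, add_zero] at this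
  refine le_trans (EReal.coe_le_coe_iff.2 ?_) this
  rw [map_add]
  linarith

end

theorem stmt_0_general {X : Type*} [NormedAddCommGroup X] [NormedSpace ℝ X]
    (h : X × (X →L[ℝ] ℝ) → EReal) (hconv : ConvexE h) :
    ((∀ p : X × (X →L[ℝ] ℝ), (p.2 p.1 : EReal) ≤ h p) ∧
        (∀ q : (X →L[ℝ] ℝ) × ((X →L[ℝ] ℝ) →L[ℝ] ℝ), (q.2 q.1 : EReal) ≤ conj h q)) ↔
      AuxCond h := by
  refine ⟨fun ⟨hπ, hπ'⟩ w => ?_, fun haux => ⟨haux.pairing_le, haux.pairing_le_conj⟩⟩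
  refine iInf_add_half_sq_norm_eq_zero (hconv.convex_epi.epi_transl w) (pairing_le_transl hπ w)
    fun q => ?_
  rw [conj_transl]
  exact pairing_le_translD hπ' _ q

theorem stmt_0 {X : Type*} [NormedAddCommGroup X] [NormedSpace ℝ X] [CompleteSpace X]
    (h : X × (X →L[ℝ] ℝ) → EReal) (hbot : ∀ p, h p ≠ ⊥) (hconv : ConvexE h) :
    ((∀ p : X × (X →L[ℝ] ℝ), (p.2 p.1 : EReal) ≤ h p) ∧
        (∀ q : (X →L[ℝ] ℝ) × ((X →L[ℝ] ℝ) →L[ℝ] ℝ), (q.2 q.1 : EReal) ≤ conj h q)) ↔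
      AuxCond h :=
  stmt_0_general h hconv
end
end

section
/- Let h : X × X* → ℝ∪{+∞} be a function such that for every (x₀,x₀*) ∈ X × X* one has inf_{(x,x*)∈X×X*} ( h_{(x₀,x₀*)}(x,x*) + ½‖x‖² + ½‖x*‖² ) = 0. Then h(z,z*) ≥ ⟨z,z*⟩ for every (z,z*) ∈ X × X*. -/
noncomputable section

open NormedSpace

theorem stmt_1 {X : Type*} [NormedAddCommGroup X] [NormedSpace ℝ X] [CompleteSpace X]
    (h : X × (X →L[ℝ] ℝ) → EReal) (hbot : ∀ p, h p ≠ ⊥) (haux : AuxCond h) :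
    ∀ p : X × (X →L[ℝ] ℝ), (p.2 p.1 : EReal) ≤ h p := by
  intro p
  have H := haux p
  have hle : (0 : EReal) ≤ transl h p ((0 : X), (0 : X →L[ℝ] ℝ))
      + ((‖(0 : X)‖ ^ 2 / 2 + ‖(0 : X →L[ℝ] ℝ)‖ ^ 2 / 2 : ℝ) : EReal) := by
    rw [← H]
    exact iInf_le _ ((0 : X), (0 : X →L[ℝ] ℝ))
  simp only [transl, zero_add, map_zero, ContinuousLinearMap.zero_apply, norm_zero] at hle
  norm_num at hle
  have hle' : (0 : EReal) ≤ h p - ((p.2 p.1 : ℝ) : EReal) := by simpa using hle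
  have := (EReal.le_sub_iff_add_le (b := ((p.2 p.1 : ℝ) : EReal)) (c := h p)
      (.inl (EReal.coe_ne_bot _)) (.inl (EReal.coe_ne_top _))).mp hle'
  simpa using this

end
end

section
/- Let h : X × X* → ℝ∪{+∞} be a function such that for every (x₀,x₀*) ∈ X × X* one has inf_{(x,x*)∈X×X*} ( h_{(x₀,x₀*)}(x,x*) + ½‖x‖² + ½‖x*‖² ) = 0. Then h*(y*,y**) ≥ ⟨y*,y**⟩ for every (y*,y**) ∈ X* × X**. -/
noncomputable section

open NormedSpace

set_option maxHeartbeats 1000000 in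
theorem stmt_2 {X : Type*} [NormedAddCommGroup X] [NormedSpace ℝ X] [CompleteSpace X]
    (h : X × (X →L[ℝ] ℝ) → EReal) (hbot : ∀ p, h p ≠ ⊥) (haux : AuxCond h) :
    ∀ q : (X →L[ℝ] ℝ) × ((X →L[ℝ] ℝ) →L[ℝ] ℝ), (q.2 q.1 : EReal) ≤ conj h q := by
  rintro ⟨y1, y2⟩
  rw [← EReal.ge_of_forall_gt_iff_ge]
  intro c hc
  simp only at hc ⊢
  rw [EReal.coe_lt_coe_iff] at hc
  set N : ℝ := ‖y2‖ with hN
  have N0 : (0:ℝ) ≤ N := hN ▸ norm_nonneg y2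
  set δ : ℝ := y2 y1 - c with hδ
  have δ0 : 0 < δ := by simp [hδ]; linarith
  set s : ℝ := δ / (2 * (N + 1)) with hs
  have s0 : 0 < s := by positivity
  have hNs : N * s ≤ δ / 2 := by
    rw [hs, mul_div_assoc']
    rw [div_le_div_iff₀ (by positivity) (by norm_num : (0:ℝ) < 2)]
    nlinarith
  -- norming functional
  obtain ⟨x, hx1, hx2⟩ := y2.exists_lt_apply_of_lt_opNorm (r := N - s) (by linarith)
  set v : X →L[ℝ] ℝ := if 0 ≤ y2 x then x else -x with hv
  have hv1 : ‖v‖ ≤ 1 := by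
    rw [hv]; split_ifs <;> simp [hx1.le]
  have hv2 : N - s < y2 v := by
    rw [hv]; split_ifs with h'
    · rwa [Real.norm_eq_abs, abs_of_nonneg h'] at hx2
    · rw [map_neg]; rw [Real.norm_eq_abs, abs_of_neg (lt_of_not_ge h')] at hx2; linarith
  set w2 : X →L[ℝ] ℝ := y1 + N • v with hw2
  -- use aux condition at (0, w2)
  have hinf := haux (0, w2)
  have hlt : (⨅ p : X × (X →L[ℝ] ℝ),
      (transl h (0, w2) p + ((‖p.1‖ ^ 2 / 2 + ‖p.2‖ ^ 2 / 2 : ℝ) : EReal))) < ((δ/2 : ℝ) : EReal) := by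
    rw [hinf]; exact_mod_cast (by positivity : (0:ℝ) < δ/2)
  obtain ⟨p, hp⟩ := iInf_lt_iff.mp hlt
  have htr : transl h (0, w2) p = h (p.1, p.2 + w2) - ((w2 p.1 : ℝ) : EReal) := by
    simp [transl, map_zero]
  rw [htr] at hp
  have hne : h (p.1, p.2 + w2) ≠ ⊥ := hbot _
  have hnt : h (p.1, p.2 + w2) ≠ ⊤ := by
    intro htop
    rw [htop, EReal.top_sub_coe, EReal.top_add_coe] at hp
    exact not_top_lt hp
  set r : ℝ := (h (p.1, p.2 + w2)).toReal with hr
  have hhr : h (p.1, p.2 + w2) = (r : EReal) := (EReal.coe_toReal hnt hne).symm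
  rw [hhr, ← EReal.coe_sub, ← EReal.coe_add, EReal.coe_lt_coe_iff] at hp
  -- key real inequality
  have hvp1 : v p.1 ≤ ‖p.1‖ := by
    calc v p.1 ≤ |v p.1| := le_abs_self _
    _ ≤ ‖v‖ * ‖p.1‖ := v.le_opNorm p.1
    _ ≤ 1 * ‖p.1‖ := by gcongr
    _ = ‖p.1‖ := one_mul _
  have hy2p2 : -(N * ‖p.2‖) ≤ y2 p.2 := by
    have := (abs_le.mp (y2.le_opNorm p.2 |>.trans_eq' (Real.norm_eq_abs _))).1
    linarith
  have hy2v : y2 v ≤ N := by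
    have := (y2.le_opNorm v).trans (by nlinarith [norm_nonneg (y2 v)] : ‖y2‖ * ‖v‖ ≤ N)
    rw [Real.norm_eq_abs] at this; exact (abs_le.mp this).2
  have hw2p1 : w2 p.1 = y1 p.1 + N * v p.1 := by
    simp [hw2]
  have hy2w2 : y2 (p.2 + w2) = y2 p.2 + y2 y1 + N * y2 v := by
    simp [hw2, map_add]; ring
  have key : c ≤ y1 p.1 + y2 (p.2 + w2) - r := by
    rw [hy2w2]
    rw [hw2p1] at hp
    nlinarith [sq_nonneg (‖p.1‖ - N), sq_nonneg (‖p.2‖ - N),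
      mul_le_mul_of_nonneg_left hvp1 N0, mul_le_mul_of_nonneg_left hv2.le N0]
  -- conclude via sup
  calc ((c : ℝ) : EReal) ≤ ((y1 p.1 + y2 (p.2 + w2) - r : ℝ) : EReal) := by exact_mod_cast key
  _ = ((y1 p.1 + y2 (p.2 + w2) : ℝ) : EReal) - h (p.1, p.2 + w2) := by
      rw [hhr, ← EReal.coe_sub]
  _ ≤ conj h (y1, y2) := le_iSup (fun p' : X × (X →L[ℝ] ℝ) =>
      (((y1 p'.1 + y2 p'.2 : ℝ) : EReal) - h p')) (p.1, p.2 + w2)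


end
end

section
/- Let h : X × X* → ℝ∪{+∞} be a convex function and let cl h denote its lower semicontinuous convex closure (the largest lower semicontinuous convex function majorized by h). Then h satisfies h ≥ π on X × X* and h* ≥ π* on X* × X** if, and only if, cl h satisfies cl h ≥ π on X × X* and (cl h)* ≥ π* on X* × X**. -/
noncomputable section

open NormedSpace

open Filter Topology
section MyAuxSec


lemma mysub_swap (r : ℝ) (x y : EReal) (h : (r : EReal) - x ≤ y) :
    (r : EReal) - y ≤ x := by
  induction x with
  | bot =>
    induction y with
    | bot => simp [EReal.coe_sub_bot] at h
    | coe y => simp [EReal.coe_sub_bot] at h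
    | top => simp [EReal.sub_top]
  | coe x =>
    induction y with
    | bot => simp [← EReal.coe_sub] at h
    | coe y =>
      rw [← EReal.coe_sub] at h ⊢
      rw [EReal.coe_le_coe_iff] at h ⊢
      linarith
    | top => simp [EReal.sub_top]
  | top => exact le_top

lemma mymul_mono {a : ℝ} (ha : 0 ≤ a) {x y : EReal} (hxy : x ≤ y) :
    (a : EReal) * x ≤ (a : EReal) * y := by
  rcases ha.eq_or_lt with rfl | ha
  · simp
  · induction x with
    | bot => rw [EReal.coe_mul_bot_of_pos ha]; exact bot_le
    | coe x =>
      induction y with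
      | bot => simp at hxy
      | coe y =>
        rw [← EReal.coe_mul, ← EReal.coe_mul, EReal.coe_le_coe_iff]
        exact mul_le_mul_of_nonneg_left (EReal.coe_le_coe_iff.1 hxy) ha.le
      | top => rw [EReal.coe_mul_top_of_pos ha]; exact le_top
    | top =>
      rw [top_le_iff] at hxy
      rw [hxy]
    
lemma mymul_ne_bot {a : ℝ} (ha : 0 < a) {x : EReal} (hx : x ≠ ⊥) :
    (a : EReal) * x ≠ ⊥ := by
  induction x with
  | bot => exact absurd rfl hx
  | coe x => rw [← EReal.coe_mul]; exact EReal.coe_ne_bot _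
  | top => rw [EReal.coe_mul_top_of_pos ha]; simp

lemma mytop_convex : ∀ (a b : ℝ), 0 ≤ a → 0 ≤ b → a + b = 1 →
    (⊤ : EReal) ≤ (a : EReal) * ⊤ + (b : EReal) * ⊤ := by
  intro a b ha hb hab
  rcases ha.eq_or_lt with rfl | ha'
  · have hb1 : b = 1 := by linarith
    simp [hb1]
  · rw [EReal.coe_mul_top_of_pos ha']
    rcases hb.eq_or_lt with rfl | hb'
    · simp
    · rw [EReal.coe_mul_top_of_pos hb']
      simp


section Hull
variable {X : Type*} [NormedAddCommGroup X] [NormedSpace ℝ X]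

/-- duality product as real function -/
def piR : X × (X →L[ℝ] ℝ) → ℝ := fun p => p.2 p.1

lemma piR_cont : Continuous (piR (X := X)) :=
  isBoundedBilinearMap_apply.continuous.comp (continuous_snd.prodMk continuous_fst)

/-- lsc hull -/
noncomputable def hull (h : X × (X →L[ℝ] ℝ) → EReal) : X × (X →L[ℝ] ℝ) → EReal :=
  fun p => ⨆ U ∈ 𝓝 p, ⨅ x ∈ U, h x

lemma hull_le (h : X × (X →L[ℝ] ℝ) → EReal) (p : X × (X →L[ℝ] ℝ)) :
    hull h p ≤ h p :=
  iSup₂_le fun U hU => iInf₂_le p (mem_of_mem_nhds hU)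

lemma hull_lsc (h : X × (X →L[ℝ] ℝ) → EReal) : LowerSemicontinuous (hull h) := by
  intro p y hy
  obtain ⟨U, hU⟩ := lt_iSup_iff.1 hy
  obtain ⟨hUp, hyU⟩ := lt_iSup_iff.1 hU
  filter_upwards [interior_mem_nhds.2 hUp] with z hz
  calc y < ⨅ x ∈ U, h x := hyU
    _ ≤ ⨅ x ∈ interior U, h x := le_iInf₂ fun x hx => iInf₂_le x (interior_subset hx)
    _ ≤ hull h z := le_iSup₂_of_le (interior U) (isOpen_interior.mem_nhds hz) le_rfl

lemma hull_ge_pi (h : X × (X →L[ℝ] ℝ) → EReal)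
    (hpi : ∀ p, ((piR p : ℝ) : EReal) ≤ h p) (p : X × (X →L[ℝ] ℝ)) :
    ((piR p : ℝ) : EReal) ≤ hull h p := by
  by_contra hlt
  push_neg at hlt
  obtain ⟨r, h1, h2⟩ := EReal.lt_iff_exists_real_btwn.1 hlt
  have hU : {z | r < piR z} ∈ 𝓝 p :=
    (isOpen_lt continuous_const piR_cont).mem_nhds (by exact_mod_cast EReal.coe_lt_coe_iff.1 h2)
  have : ((r : ℝ) : EReal) ≤ hull h p := by
    refine le_trans ?_ (le_iSup₂_of_le {z | r < piR z} hU le_rfl)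
    refine le_iInf₂ fun x hx => ?_
    exact le_trans (by exact_mod_cast (le_of_lt hx)) (hpi x)
  exact absurd (lt_of_le_of_lt this h1) (lt_irrefl _)

end Hull

section Conv
variable {X : Type*} [NormedAddCommGroup X] [NormedSpace ℝ X]


lemma pi_lower_bound (p u : X × (X →L[ℝ] ℝ)) (hu : u ∈ Metric.ball p 1) :
    -((‖p.2‖ + 1) * (‖p.1‖ + 1)) ≤ piR u := by
  have h1 : ‖u.1‖ ≤ ‖p.1‖ + 1 := by
    have hd := mem_ball_iff_norm.1 hu
    have : ‖u.1 - p.1‖ < 1 := by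
      calc ‖u.1 - p.1‖ = ‖(u - p).1‖ := rfl
        _ ≤ ‖u - p‖ := norm_fst_le _
        _ < 1 := hd
    calc ‖u.1‖ = ‖p.1 + (u.1 - p.1)‖ := by rw [add_sub_cancel]
      _ ≤ ‖p.1‖ + ‖u.1 - p.1‖ := norm_add_le _ _
      _ ≤ ‖p.1‖ + 1 := by linarith
  have h2 : ‖u.2‖ ≤ ‖p.2‖ + 1 := by
    have hd := mem_ball_iff_norm.1 hu
    have : ‖u.2 - p.2‖ < 1 := by
      calc ‖u.2 - p.2‖ = ‖(u - p).2‖ := rfl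
        _ ≤ ‖u - p‖ := norm_snd_le _
        _ < 1 := hd
    calc ‖u.2‖ = ‖p.2 + (u.2 - p.2)‖ := by rw [add_sub_cancel]
      _ ≤ ‖p.2‖ + ‖u.2 - p.2‖ := norm_add_le _ _
      _ ≤ ‖p.2‖ + 1 := by linarith
  have h3 : |piR u| ≤ (‖p.2‖ + 1) * (‖p.1‖ + 1) := by
    calc |piR u| = ‖u.2 u.1‖ := rfl
      _ ≤ ‖u.2‖ * ‖u.1‖ := u.2.le_opNorm u.1
      _ ≤ (‖p.2‖ + 1) * (‖p.1‖ + 1) := by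
          apply mul_le_mul h2 h1 (norm_nonneg _) (by positivity)
  linarith [neg_abs_le (piR u)]

lemma hull_convex (h : X × (X →L[ℝ] ℝ) → EReal) (hconv : ConvexE h)
    (hpi : ∀ p, ((piR p : ℝ) : EReal) ≤ h p) : ConvexE (hull h) := by
  intro p q a b ha hb hab
  rcases ha.eq_or_lt with rfl | ha'
  · have hb1 : b = 1 := by linarith
    subst hb1
    simp
  rcases hb.eq_or_lt with rfl | hb'
  · have ha1 : a = 1 := by linarith
    subst ha1
    simp
  -- main case 0 < a, 0 < b
  refine iSup₂_le fun U hU => ?_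
  have hφ : Continuous (fun z : (X × (X →L[ℝ] ℝ)) × (X × (X →L[ℝ] ℝ)) => a • z.1 + b • z.2) :=
    (continuous_fst.const_smul a).add (continuous_snd.const_smul b)
  have hpre : (fun z : (X × (X →L[ℝ] ℝ)) × (X × (X →L[ℝ] ℝ)) => a • z.1 + b • z.2) ⁻¹' U
      ∈ 𝓝 (p, q) := hφ.continuousAt.preimage_mem_nhds (by simpa using hU)
  obtain ⟨V, hV, W, hW, hVW⟩ := mem_nhds_prod_iff.1 hpre
  set V' := V ∩ Metric.ball p 1 with hV'def
  set W' := W ∩ Metric.ball q 1 with hW'def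
  have hV' : V' ∈ 𝓝 p := Filter.inter_mem hV (Metric.ball_mem_nhds p one_pos)
  have hW' : W' ∈ 𝓝 q := Filter.inter_mem hW (Metric.ball_mem_nhds q one_pos)
  set α := ⨅ x ∈ V', h x with hαdef
  set β := ⨅ x ∈ W', h x with hβdef
  have hαbot : α ≠ ⊥ := by
    have : ((-((‖p.2‖ + 1) * (‖p.1‖ + 1)) : ℝ) : EReal) ≤ α := by
      refine le_iInf₂ fun x hx => ?_
      exact le_trans (by exact_mod_cast pi_lower_bound p x hx.2) (hpi x)
    intro hbot
    rw [hbot, le_bot_iff] at this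
    exact EReal.coe_ne_bot _ this
  have hβbot : β ≠ ⊥ := by
    have : ((-((‖q.2‖ + 1) * (‖q.1‖ + 1)) : ℝ) : EReal) ≤ β := by
      refine le_iInf₂ fun x hx => ?_
      exact le_trans (by exact_mod_cast pi_lower_bound q x hx.2) (hpi x)
    intro hbot
    rw [hbot, le_bot_iff] at this
    exact EReal.coe_ne_bot _ this
  have key : (⨅ x ∈ U, h x) ≤ (a : EReal) * α + (b : EReal) * β := by
    refine EReal.le_add_of_forall_gt (Or.inl (mymul_ne_bot ha' hαbot))
      (Or.inr (mymul_ne_bot hb' hβbot)) fun A' hA' B' hB' => ?_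
    obtain ⟨r, hr1, hr2⟩ := EReal.lt_iff_exists_real_btwn.1 hA'
    obtain ⟨s, hs1, hs2⟩ := EReal.lt_iff_exists_real_btwn.1 hB'
    have hαlt : α < ((r / a : ℝ) : EReal) := by
      by_contra hcon
      push_neg at hcon
      have := mymul_mono ha'.le hcon
      rw [← EReal.coe_mul, mul_div_cancel₀ _ (ne_of_gt ha')] at this
      exact absurd (lt_of_le_of_lt this hr1) (lt_irrefl _)
    have hβlt : β < ((s / b : ℝ) : EReal) := by
      by_contra hcon
      push_neg at hcon
      have := mymul_mono hb'.le hcon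
      rw [← EReal.coe_mul, mul_div_cancel₀ _ (ne_of_gt hb')] at this
      exact absurd (lt_of_le_of_lt this hs1) (lt_irrefl _)
    obtain ⟨u, hu⟩ := iInf_lt_iff.1 hαlt
    obtain ⟨huV, hult⟩ := iInf_lt_iff.1 hu
    obtain ⟨v, hv⟩ := iInf_lt_iff.1 hβlt
    obtain ⟨hvW, hvlt⟩ := iInf_lt_iff.1 hv
    have hmem : a • u + b • v ∈ U := hVW (Set.mk_mem_prod huV.1 hvW.1)
    calc (⨅ x ∈ U, h x) ≤ h (a • u + b • v) := iInf₂_le _ hmem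
      _ ≤ (a : EReal) * h u + (b : EReal) * h v := hconv u v a b ha hb hab
      _ ≤ A' + B' := by
          apply add_le_add
          · refine le_trans (le_trans (mymul_mono ha'.le hult.le) ?_) hr2.le
            rw [← EReal.coe_mul, mul_div_cancel₀ _ (ne_of_gt ha')]
          · refine le_trans (le_trans (mymul_mono hb'.le hvlt.le) ?_) hs2.le
            rw [← EReal.coe_mul, mul_div_cancel₀ _ (ne_of_gt hb')]
  refine le_trans key (add_le_add ?_ ?_)
  · exact mymul_mono ha (le_iSup₂_of_le V' hV' le_rfl)
  · exact mymul_mono hb (le_iSup₂_of_le W' hW' le_rfl)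

end Conv

lemma conj_anti {X : Type*} [NormedAddCommGroup X] [NormedSpace ℝ X]
    {g₁ g₂ : X × (X →L[ℝ] ℝ) → EReal} (hle : ∀ p, g₁ p ≤ g₂ p)
    (q : (X →L[ℝ] ℝ) × ((X →L[ℝ] ℝ) →L[ℝ] ℝ)) : conj g₂ q ≤ conj g₁ q :=
  iSup_mono fun p => EReal.sub_le_sub le_rfl (hle p)

end MyAuxSec

lemma affine_convex {X : Type*} [NormedAddCommGroup X] [NormedSpace ℝ X]
    (q : (X →L[ℝ] ℝ) × ((X →L[ℝ] ℝ) →L[ℝ] ℝ)) (c : EReal) (hc : c ≠ ⊤) :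
    ConvexE (fun p : X × (X →L[ℝ] ℝ) => ((q.1 p.1 + q.2 p.2 : ℝ) : EReal) - c) := by
  induction c with
  | bot =>
    intro p' q' a b ha hb hab
    simp only [EReal.coe_sub_bot]
    exact mytop_convex a b ha hb hab
  | coe c' =>
    intro p' q' a b ha hb hab
    have hb1 : b = 1 - a := by linarith
    subst hb1
    simp only [← EReal.coe_sub, ← EReal.coe_mul, ← EReal.coe_add,
      EReal.coe_le_coe_iff, Prod.fst_add, Prod.snd_add, Prod.smul_fst, Prod.smul_snd,
      map_add, map_smul, smul_eq_mul]
    exact le_of_eq (by ring)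
  | top => exact absurd rfl hc

lemma affine_lsc {X : Type*} [NormedAddCommGroup X] [NormedSpace ℝ X]
    (q : (X →L[ℝ] ℝ) × ((X →L[ℝ] ℝ) →L[ℝ] ℝ)) (c : EReal) (hc : c ≠ ⊤) :
    LowerSemicontinuous
      (fun p : X × (X →L[ℝ] ℝ) => ((q.1 p.1 + q.2 p.2 : ℝ) : EReal) - c) := by
  induction c with
  | bot =>
    simp only [EReal.coe_sub_bot]
    exact lowerSemicontinuous_const
  | coe c' =>
    simp only [← EReal.coe_sub]
    refine Continuous.lowerSemicontinuous ?_
    refine continuous_coe_real_ereal.comp ?_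
    exact ((q.1.continuous.comp continuous_fst).add
      (q.2.continuous.comp continuous_snd)).sub continuous_const
  | top => exact absurd rfl hc

theorem stmt_4 {X : Type*} [NormedAddCommGroup X] [NormedSpace ℝ X] [CompleteSpace X]
    (h : X × (X →L[ℝ] ℝ) → EReal) (hbot : ∀ p, h p ≠ ⊥) (hconv : ConvexE h)
    (clh : X × (X →L[ℝ] ℝ) → EReal)
    (hcl₁ : ConvexE clh) (hcl₂ : LowerSemicontinuous clh) (hcl₃ : ∀ p, clh p ≤ h p)
    (hcl₄ : ∀ g : X × (X →L[ℝ] ℝ) → EReal, ConvexE g → LowerSemicontinuous g →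
      (∀ p, g p ≤ h p) → ∀ p, g p ≤ clh p) :
    ((∀ p : X × (X →L[ℝ] ℝ), (p.2 p.1 : EReal) ≤ h p) ∧
        (∀ q : (X →L[ℝ] ℝ) × ((X →L[ℝ] ℝ) →L[ℝ] ℝ), (q.2 q.1 : EReal) ≤ conj h q)) ↔
      ((∀ p : X × (X →L[ℝ] ℝ), (p.2 p.1 : EReal) ≤ clh p) ∧
        (∀ q : (X →L[ℝ] ℝ) × ((X →L[ℝ] ℝ) →L[ℝ] ℝ), (q.2 q.1 : EReal) ≤ conj clh q)) := by
  constructor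
  · rintro ⟨h1, h2⟩
    refine ⟨?_, fun q => (h2 q).trans (conj_anti hcl₃ q)⟩
    have hhull := hcl₄ (hull h) (hull_convex h hconv h1) (hull_lsc h) (hull_le h)
    exact fun p => (hull_ge_pi h h1 p).trans (hhull p)
  · rintro ⟨c1, c2⟩
    refine ⟨fun p => (c1 p).trans (hcl₃ p), fun q => (c2 q).trans ?_⟩
    by_cases hc : conj h q = ⊤
    · rw [hc]; exact le_top
    have hterm : ∀ p, (((q.1 p.1 + q.2 p.2 : ℝ) : EReal) - h p) ≤ conj h q :=
      fun p => le_iSup (fun p => (((q.1 p.1 + q.2 p.2 : ℝ) : EReal) - h p)) p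
    have hg_le : ∀ p, (((q.1 p.1 + q.2 p.2 : ℝ) : EReal) - conj h q) ≤ h p :=
      fun p => mysub_swap _ _ _ (hterm p)
    have hg_cl := hcl₄ _ (affine_convex q (conj h q) hc) (affine_lsc q (conj h q) hc) hg_le
    exact iSup_le fun p => mysub_swap _ _ _ (hg_cl p)

end
end

section
/- Let h : X × X* → ℝ∪{+∞} be a convex function and let cl h denote its lower semicontinuous convex closure. Then h satisfies the auxiliary condition — for every (x₀,x₀*) ∈ X × X*, inf_{(x,x*)∈X×X*} ( h_{(x₀,x₀*)}(x,x*) + ½‖x‖² + ½‖x*‖² ) = 0 — if, and only if, cl h satisfies the same auxiliary condition. -/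
/-! The infimum of `f + c`, for `c` continuous and real-valued, does not change when `f` is
replaced by its lower semicontinuous hull `x ↦ liminf_{y → x} f y`. For convex `h` this hull is
again convex as long as it never takes the value `⊥`; it then lies between `cl h` and `h`, so the
infima for `h` and for `cl h` agree. If the hull does take the value `⊥`, both infima are `⊥`.
After the change of variables `q = p + (x₀,x₀*)`, the auxiliary condition is a statement about
such infima, with `c` the continuous penalty `½‖x‖² + ½‖x*‖²` minus the duality terms. -/

noncomputable section

open NormedSpace

open Filter Topology

def lscHull {Z : Type*} [TopologicalSpace Z] (f : Z → EReal) (x : Z) : EReal :=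
  liminf f (𝓝 x)

section LscHull

variable {Z : Type*} [TopologicalSpace Z]

theorem lscHull_le (f : Z → EReal) (x : Z) : lscHull f x ≤ f x :=
  liminf_le_of_frequently_le' (frequently_nhds_iff.2 fun _ hx _ => ⟨x, hx, le_rfl⟩)

theorem LowerSemicontinuous.le_lscHull {f g : Z → EReal} (hg : LowerSemicontinuous g)
    (hgf : g ≤ f) : g ≤ lscHull f :=
  fun x => (hg.le_liminf x).trans (liminf_le_liminf (.of_forall hgf))

theorem lowerSemicontinuous_lscHull (f : Z → EReal) : LowerSemicontinuous (lscHull f) := by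
  intro x y hy
  obtain ⟨y', hyy', hy'⟩ := exists_between hy
  filter_upwards [eventually_eventually_nhds.2 (eventually_lt_of_lt_liminf hy')] with x' hx'
  exact hyy'.trans_le (le_liminf_of_le (by isBoundedDefault) (hx'.mono fun _ => le_of_lt))

theorem iInf_lscHull_add {f : Z → EReal} {c : Z → ℝ} (hc : Continuous c) :
    ⨅ x, (lscHull f x + c x) = ⨅ x, (f x + c x) := by
  refine le_antisymm (iInf_mono fun x => by gcongr; exact lscHull_le f x) (le_iInf fun x => ?_)
  set m := ⨅ x, (f x + c x)
  -- `m - c` is a continuous minorant of `f`, hence lies below its hull.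
  have hcont : Continuous fun y => m + ((-c y : ℝ) : EReal) :=
    continuous_iff_continuousAt.2 fun y =>
      (EReal.continuousAt_add (Or.inr (EReal.coe_ne_bot _)) (Or.inr (EReal.coe_ne_top _))).comp
        (continuousAt_const.prodMk (continuous_coe_real_ereal.comp hc.neg).continuousAt)
  have hshift : ∀ y e, m + ((-c y : ℝ) : EReal) ≤ e ↔ m ≤ e + c y := fun y e => by
    rw [EReal.coe_neg, ← sub_eq_add_neg,
      EReal.sub_le_iff_le_add (.inl (EReal.coe_ne_bot _)) (.inl (EReal.coe_ne_top _))]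
  exact (hshift x _).1 <|
    hcont.lowerSemicontinuous.le_lscHull (fun y => (hshift y _).2 (iInf_le _ y)) x

end LscHull

theorem EReal.le_coe_mul_add_coe_mul_of_forall_lt {a b : ℝ} (ha : 0 < a) (hb : 0 < b)
    {x y z : EReal} (hx : x ≠ ⊥) (hy : y ≠ ⊥)
    (H : ∀ s t : ℝ, x < s → y < t → z ≤ ((a * s + b * t : ℝ) : EReal)) :
    z ≤ a * x + b * y := by
  have hax : (a : EReal) * x ≠ ⊥ := by simp [EReal.mul_ne_bot, hx, ha.le]
  have hby : (b : EReal) * y ≠ ⊥ := by simp [EReal.mul_ne_bot, hy, hb.le]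
  rcases eq_or_ne x ⊤ with rfl | hx'
  · simp [EReal.coe_mul_top_of_pos ha, EReal.top_add_of_ne_bot hby]
  rcases eq_or_ne y ⊤ with rfl | hy'
  · simp [EReal.coe_mul_top_of_pos hb, EReal.add_top_of_ne_bot hax]
  lift x to ℝ using ⟨hx', hx⟩
  lift y to ℝ using ⟨hy', hy⟩
  refine EReal.le_of_forall_lt_iff_le.1 fun r hr => ?_
  norm_cast at hr
  set δ := (r - (a * x + b * y)) / (a + b)
  have hδ : 0 < δ := _root_.div_pos (by linarith) (by linarith)
  have hr_eq : a * (x + δ) + b * (y + δ) = r := by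
    simp only [δ]
    field_simp
    ring
  simpa [hr_eq] using H (x + δ) (y + δ) (by exact_mod_cast by linarith)
    (by exact_mod_cast by linarith)

section ConvexE

variable {X : Type*} [NormedAddCommGroup X] [NormedSpace ℝ X] {h : X × (X →L[ℝ] ℝ) → EReal}

theorem ConvexE.le_of_lt_of_lt (hh : ConvexE h) {a b : ℝ} (ha : 0 ≤ a) (hb : 0 ≤ b)
    (hab : a + b = 1) {x y : X × (X →L[ℝ] ℝ)} {s t : ℝ} (hx : h x < s) (hy : h y < t) :
    h (a • x + b • y) ≤ ((a * s + b * t : ℝ) : EReal) := by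
  refine (hh x y a b ha hb hab).trans ?_
  rw [EReal.coe_add, EReal.coe_mul, EReal.coe_mul]
  exact add_le_add (mul_le_mul_of_nonneg_left hx.le (EReal.coe_nonneg.2 ha))
    (mul_le_mul_of_nonneg_left hy.le (EReal.coe_nonneg.2 hb))

theorem lscHull_smul_add_smul_le (hh : ConvexE h) {a b : ℝ} (ha : 0 ≤ a) (hb : 0 ≤ b)
    (hab : a + b = 1) {p q : X × (X →L[ℝ] ℝ)} {s t : ℝ} (hp : lscHull h p < s)
    (hq : lscHull h q < t) : lscHull h (a • p + b • q) ≤ ((a * s + b * t : ℝ) : EReal) := by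
  have hcomb : Tendsto (fun z : (X × (X →L[ℝ] ℝ)) × (X × (X →L[ℝ] ℝ)) => a • z.1 + b • z.2)
      (𝓝 p ×ˢ 𝓝 q) (𝓝 (a • p + b • q)) := by
    rw [← nhds_prod_eq]
    exact (by fun_prop : Continuous fun z : (X × (X →L[ℝ] ℝ)) × (X × (X →L[ℝ] ℝ)) =>
      a • z.1 + b • z.2).tendsto (p, q)
  refine liminf_le_of_frequently_le' (hcomb.frequently ?_)
  exact (frequently_prod_and.2 ⟨frequently_lt_of_liminf_lt (h := hp),
    frequently_lt_of_liminf_lt (h := hq)⟩).mono fun z hz => hh.le_of_lt_of_lt ha hb hab hz.1 hz.2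

theorem ConvexE.lscHull (hh : ConvexE h) (hbot : ∀ z, lscHull h z ≠ ⊥) :
    ConvexE (lscHull h) := by
  intro p q a b ha hb hab
  rcases ha.eq_or_lt with rfl | ha
  · obtain rfl : b = 1 := by linarith
    simp
  rcases hb.eq_or_lt with rfl | hb
  · obtain rfl : a = 1 := by linarith
    simp
  exact EReal.le_coe_mul_add_coe_mul_of_forall_lt ha hb (hbot p) (hbot q)
    fun s t hs ht => lscHull_smul_add_smul_le hh ha.le hb.le hab hs ht

end ConvexE

theorem iInf_add_eq_iInf_closure_add {X : Type*} [NormedAddCommGroup X] [NormedSpace ℝ X]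
    {h clh : X × (X →L[ℝ] ℝ) → EReal} (hconv : ConvexE h) (hcl_le : ∀ p, clh p ≤ h p)
    (hcl_max : ∀ g : X × (X →L[ℝ] ℝ) → EReal, ConvexE g → LowerSemicontinuous g →
      (∀ p, g p ≤ h p) → ∀ p, g p ≤ clh p)
    {c : X × (X →L[ℝ] ℝ) → ℝ} (hc : Continuous c) :
    ⨅ p, (h p + c p) = ⨅ p, (clh p + c p) := by
  refine le_antisymm ?_ (iInf_mono fun p => by gcongr; exact hcl_le p)
  rw [← iInf_lscHull_add hc]
  by_cases hbot : ∀ p, lscHull h p ≠ ⊥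
  · refine iInf_mono fun p => ?_
    gcongr
    exact hcl_max _ (hconv.lscHull hbot) (lowerSemicontinuous_lscHull h) (lscHull_le h) p
  · obtain ⟨p₀, hp₀⟩ := not_forall_not.1 hbot
    exact (iInf_le _ p₀).trans (by simp [hp₀])

/-- The real part of the summand of `AuxCond` at `w`, as a function of `q = p + w`. -/
def auxCost {X : Type*} [NormedAddCommGroup X] [NormedSpace ℝ X]
    (w q : X × (X →L[ℝ] ℝ)) : ℝ :=
  ‖q.1 - w.1‖ ^ 2 / 2 + ‖q.2 - w.2‖ ^ 2 / 2 - (w.2 (q.1 - w.1) + (q.2 - w.2) w.1 + w.2 w.1)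

theorem continuous_auxCost {X : Type*} [NormedAddCommGroup X] [NormedSpace ℝ X]
    (w : X × (X →L[ℝ] ℝ)) : Continuous (auxCost w) := by
  unfold auxCost
  fun_prop

theorem iInf_transl_add_eq {X : Type*} [NormedAddCommGroup X] [NormedSpace ℝ X]
    (g : X × (X →L[ℝ] ℝ) → EReal) (w : X × (X →L[ℝ] ℝ)) :
    ⨅ p, (transl g w p + ((‖p.1‖ ^ 2 / 2 + ‖p.2‖ ^ 2 / 2 : ℝ) : EReal)) =
      ⨅ q, (g q + auxCost w q) := by
  rw [← (Equiv.subRight w).iInf_comp]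
  refine iInf_congr fun q => ?_
  simp only [transl, auxCost, Equiv.subRight_apply, Prod.fst_sub, Prod.snd_sub, sub_add_cancel]
  rw [sub_eq_add_neg, add_assoc, ← EReal.coe_neg, ← EReal.coe_add]
  congr 2
  ring

theorem stmt_5_general {X : Type*} [NormedAddCommGroup X] [NormedSpace ℝ X]
    (h : X × (X →L[ℝ] ℝ) → EReal) (hconv : ConvexE h)
    (clh : X × (X →L[ℝ] ℝ) → EReal)
    (hcl₃ : ∀ p, clh p ≤ h p)
    (hcl₄ : ∀ g : X × (X →L[ℝ] ℝ) → EReal, ConvexE g → LowerSemicontinuous g →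
      (∀ p, g p ≤ h p) → ∀ p, g p ≤ clh p) :
    AuxCond h ↔ AuxCond clh := by
  refine forall_congr' fun w => ?_
  rw [iInf_transl_add_eq, iInf_transl_add_eq,
    iInf_add_eq_iInf_closure_add hconv hcl₃ hcl₄ (continuous_auxCost w)]

theorem stmt_5 {X : Type*} [NormedAddCommGroup X] [NormedSpace ℝ X] [CompleteSpace X]
    (h : X × (X →L[ℝ] ℝ) → EReal) (hbot : ∀ p, h p ≠ ⊥) (hconv : ConvexE h)
    (clh : X × (X →L[ℝ] ℝ) → EReal)
    (hcl₁ : ConvexE clh) (hcl₂ : LowerSemicontinuous clh) (hcl₃ : ∀ p, clh p ≤ h p)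
    (hcl₄ : ∀ g : X × (X →L[ℝ] ℝ) → EReal, ConvexE g → LowerSemicontinuous g →
      (∀ p, g p ≤ h p) → ∀ p, g p ≤ clh p) :
    AuxCond h ↔ AuxCond clh :=
  stmt_5_general h hconv clh hcl₃ hcl₄

end
end

section
/- Let T : X ⇉ X* be maximal monotone and suppose some h ∈ F_T satisfies the auxiliary condition: for every (x₀,x₀*) ∈ X × X*, inf_{(x,x*)∈X×X*} ( h_{(x₀,x₀*)}(x,x*) + ½‖x‖² + ½‖x*‖² ) = 0. Then every g ∈ F_T satisfies the same auxiliary condition: for every (x₀,x₀*) ∈ X × X*, inf_{(x,x*)∈X×X*} ( g_{(x₀,x₀*)}(x,x*) + ½‖x‖² + ½‖x*‖² ) = 0. -/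
noncomputable section

open NormedSpace

/-!
Write `π(x, x*) = ⟨x, x*⟩` and `ρ = π + ½‖x‖² + ½‖x*‖² ≥ 0`. Unfolding the translate,
`h_{w}(p) + ½‖p.1‖² + ½‖p.2‖² = (h - π)(p + w) + ρ(p)`. For `g ∈ F_T` the gap `g - π` is
nonnegative and vanishes on `T`, so `g` satisfies the auxiliary condition as soon as
`inf_{t ∈ T} ρ(t - w) = 0` for every `w`, a property of `T` alone.

To get it from `h`, use convexity at midpoints: `π` of a midpoint is the mean of the values
minus a quarter of `π` of the difference, so two points with small gap `h - π` have a
difference whose pairing is almost nonnegative. Since `ρ ≥ 0`, applying the auxiliary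
condition at a point `v` whose gap is below `δ²` gives a point within `3δ` of `v` whose gap is
below `(δ/2)²`. Iterating gives a Cauchy sequence. At its limit `h = π` by lower
semicontinuity, and such a point lies in `T` by maximal monotonicity.
-/

open Filter Topology

section

variable {X : Type*} [NormedAddCommGroup X] [NormedSpace ℝ X]
  {h : X × (X →L[ℝ] ℝ) → EReal} {T : Set (X × (X →L[ℝ] ℝ))}

def pairingAddHalfNormSq (z : X × (X →L[ℝ] ℝ)) : ℝ :=
  z.2 z.1 + (‖z.1‖ ^ 2 / 2 + ‖z.2‖ ^ 2 / 2)

theorem abs_apply_le_opNorm (f : X →L[ℝ] ℝ) (x : X) : |f x| ≤ ‖f‖ * ‖x‖ := by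
  simpa only [Real.norm_eq_abs] using f.le_opNorm x

theorem abs_apply_le_norm_mul_norm (x y : X × (X →L[ℝ] ℝ)) :
    |y.2 x.1| ≤ ‖y‖ * ‖x‖ :=
  (abs_apply_le_opNorm y.2 x.1).trans
    (mul_le_mul (norm_snd_le y) (norm_fst_le x) (norm_nonneg _) (norm_nonneg _))

theorem sq_norm_le_pairing_add (z : X × (X →L[ℝ] ℝ)) :
    ‖z‖ ^ 2 / 2 ≤ z.2 z.1 + (‖z.1‖ ^ 2 + ‖z.2‖ ^ 2) := by
  have hc := neg_abs_le (z.2 z.1) |>.trans' (neg_le_neg (abs_apply_le_opNorm z.2 z.1))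
  rcases max_cases ‖z.1‖ ‖z.2‖ with ⟨hm, -⟩ | ⟨hm, -⟩ <;>
    rw [Prod.norm_def, hm] <;> nlinarith [sq_nonneg (‖z.1‖ - ‖z.2‖)]

theorem pairingAddHalfNormSq_nonneg (z : X × (X →L[ℝ] ℝ)) :
    0 ≤ pairingAddHalfNormSq z := by
  have hc := neg_abs_le (z.2 z.1) |>.trans' (neg_le_neg (abs_apply_le_opNorm z.2 z.1))
  unfold pairingAddHalfNormSq
  nlinarith [sq_nonneg (‖z.1‖ - ‖z.2‖)]

theorem pairing_add (x y : X × (X →L[ℝ] ℝ)) :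
    (x + y).2 (x + y).1 = x.2 x.1 + y.2 x.1 + x.2 y.1 + y.2 y.1 := by
  simp only [Prod.fst_add, Prod.snd_add, add_apply, map_add]
  ring

theorem pairing_midpoint (x y : X × (X →L[ℝ] ℝ)) :
    ((1 / 2 : ℝ) • x + (1 / 2 : ℝ) • y).2 ((1 / 2 : ℝ) • x + (1 / 2 : ℝ) • y).1
      = (x.2 x.1 + y.2 y.1) / 2 - (x - y).2 (x - y).1 / 4 := by
  simp only [Prod.fst_add, Prod.snd_add, Prod.smul_fst, Prod.smul_snd, Prod.fst_sub,
    Prod.snd_sub, add_apply, smul_apply, sub_apply, map_add, map_sub, map_smul, smul_eq_mul]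
  ring

theorem norm_le_of_two_mul_pairingAddHalfNormSq_le {p a : X × (X →L[ℝ] ℝ)}
    (hp : 2 * pairingAddHalfNormSq p ≤ 2 + (p + a).2 (p + a).1) :
    ‖p‖ ≤ 5 * ‖a‖ + 2 := by
  rw [pairing_add, pairingAddHalfNormSq] at hp
  have hsq := sq_norm_le_pairing_add p
  have h₁ := abs_le.1 (abs_apply_le_norm_mul_norm p a)
  have h₂ := abs_le.1 (abs_apply_le_norm_mul_norm a p)
  have h₃ := abs_le.1 (abs_apply_le_norm_mul_norm a a)
  nlinarith [norm_nonneg p, norm_nonneg a]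

theorem pairingAddHalfNormSq_le_of_norm_sub_le {s p : X × (X →L[ℝ] ℝ)} {d R : ℝ}
    (hsp : ‖s - p‖ ≤ d) (hp : ‖p‖ ≤ R) :
    pairingAddHalfNormSq s ≤ pairingAddHalfNormSq p + 4 * d * R + 2 * d ^ 2 := by
  obtain ⟨e, rfl⟩ : ∃ e, s = p + e := ⟨s - p, (add_sub_cancel p s).symm⟩
  rw [add_sub_cancel_left] at hsp
  have h₁ : ‖(p + e).1‖ ≤ ‖p.1‖ + d :=
    (norm_add_le _ _).trans (by linarith [norm_fst_le e])
  have h₂ : ‖(p + e).2‖ ≤ ‖p.2‖ + d :=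
    (norm_add_le _ _).trans (by linarith [norm_snd_le e])
  have hp₁ := (norm_fst_le p).trans hp
  have hp₂ := (norm_snd_le p).trans hp
  have hd : 0 ≤ d := (norm_nonneg e).trans hsp
  have hc₁ := abs_le.1 (abs_apply_le_norm_mul_norm p e)
  have hc₂ := abs_le.1 (abs_apply_le_norm_mul_norm e p)
  have hc₃ := abs_le.1 (abs_apply_le_norm_mul_norm e e)
  unfold pairingAddHalfNormSq
  rw [pairing_add]
  nlinarith [pow_le_pow_left₀ (norm_nonneg _) h₁ 2, pow_le_pow_left₀ (norm_nonneg _) h₂ 2,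
    norm_nonneg p.1, norm_nonneg p.2, norm_nonneg e]

theorem exists_tendsto_of_forall_exists_dist_le_geometric_two {α : Type*} [PseudoMetricSpace α]
    [CompleteSpace α] {P : ℕ → α → Prop} {C : ℝ} {x₀ : α} (h₀ : P 0 x₀)
    (hstep : ∀ n x, P n x → ∃ y, P (n + 1) y ∧ dist x y ≤ C / 2 / 2 ^ n) :
    ∃ u : ℕ → α, ∃ a, (∀ n, P n (u n)) ∧ Tendsto u atTop (𝓝 a) ∧ dist x₀ a ≤ C := by
  choose! next hnext hdist using hstep
  let u : ℕ → α := fun n => Nat.rec x₀ next n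
  have hu : ∀ n, P n (u n) := fun n => Nat.rec h₀ (fun n ih => hnext n _ ih) n
  have hud : ∀ n, dist (u n) (u (n + 1)) ≤ C / 2 / 2 ^ n := fun n => hdist n _ (hu n)
  obtain ⟨a, ha⟩ := cauchySeq_tendsto_of_complete (cauchySeq_of_le_geometric_two hud)
  exact ⟨u, a, hu, ha, dist_le_of_le_geometric_two_of_tendsto₀ hud ha⟩

theorem LowerSemicontinuous.le_of_tendsto {α ι γ : Type*} [TopologicalSpace α] [LinearOrder γ]
    [TopologicalSpace γ] [ClosedIciTopology γ] {f : α → γ} (hf : LowerSemicontinuous f)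
    {l : Filter ι} [l.NeBot] {u : ι → α} {g : ι → γ} {x : α} {r : γ}
    (hu : Tendsto u l (𝓝 x)) (hg : Tendsto g l (𝓝 r)) (hle : ∀ᶠ i in l, f (u i) ≤ g i) :
    f x ≤ r :=
  hf.isClosed_epigraph.mem_of_tendsto (hu.prodMk_nhds hg) hle

theorem ConvexE.midpoint_le (hc : ConvexE h) {x y : X × (X →L[ℝ] ℝ)} {A B : ℝ}
    (hx : h x ≤ A) (hy : h y ≤ B) :
    h ((1 / 2 : ℝ) • x + (1 / 2 : ℝ) • y) ≤ ((A + B) / 2 : ℝ) := by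
  have hhalf : (0 : EReal) ≤ ((1 / 2 : ℝ) : EReal) := by norm_num
  calc h ((1 / 2 : ℝ) • x + (1 / 2 : ℝ) • y)
      ≤ ((1 / 2 : ℝ) : EReal) * h x + ((1 / 2 : ℝ) : EReal) * h y :=
        hc x y _ _ (by norm_num) (by norm_num) (by norm_num)
    _ ≤ ((1 / 2 : ℝ) : EReal) * A + ((1 / 2 : ℝ) : EReal) * B :=
        add_le_add (mul_le_mul_of_nonneg_left hx hhalf) (mul_le_mul_of_nonneg_left hy hhalf)
    _ = ((A + B) / 2 : ℝ) := by
        rw [← EReal.coe_mul, ← EReal.coe_mul, ← EReal.coe_add]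
        congr 1
        ring

theorem transl_add_halfNormSq (w p : X × (X →L[ℝ] ℝ)) :
    transl h w p + ((‖p.1‖ ^ 2 / 2 + ‖p.2‖ ^ 2 / 2 : ℝ) : EReal)
      = h (p + w) + ((pairingAddHalfNormSq p - (p + w).2 (p + w).1 : ℝ) : EReal) := by
  rw [transl, sub_eq_add_neg, add_assoc, ← EReal.coe_neg, ← EReal.coe_add, pairing_add,
    pairingAddHalfNormSq]
  congr 2
  ring

theorem neg_pairing_sub_le (hc : ConvexE h)
    (hge : ∀ z : X × (X →L[ℝ] ℝ), (z.2 z.1 : EReal) ≤ h z)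
    {x y : X × (X →L[ℝ] ℝ)} {α β : ℝ} (hx : h x ≤ (x.2 x.1 + α : ℝ))
    (hy : h y ≤ (y.2 y.1 + β : ℝ)) :
    -(x - y).2 (x - y).1 ≤ 2 * (α + β) := by
  have hmid := (hge _).trans (hc.midpoint_le hx hy)
  rw [EReal.coe_le_coe_iff, pairing_midpoint] at hmid
  linarith

theorem AuxCond.exists_lt (haux : AuxCond h) (w : X × (X →L[ℝ] ℝ)) {ε : ℝ}
    (hε : 0 < ε) :
    ∃ p, h (p + w) < ((p + w).2 (p + w).1 + ε - pairingAddHalfNormSq p : ℝ) := by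
  obtain ⟨p, hp⟩ := iInf_lt_iff.1 ((haux w).trans_lt (EReal.coe_pos.2 hε))
  refine ⟨p, ?_⟩
  rw [transl_add_halfNormSq] at hp
  have := EReal.add_lt_add_right_coe hp (-(pairingAddHalfNormSq p - (p + w).2 (p + w).1))
  rwa [add_assoc, ← EReal.coe_add, add_neg_cancel, EReal.coe_zero, add_zero, ← EReal.coe_add,
    ← sub_eq_add_neg, sub_sub_eq_add_sub, add_comm ε] at this

theorem exists_dist_le_of_le_pairing_add_sq (hc : ConvexE h)
    (hge : ∀ z : X × (X →L[ℝ] ℝ), (z.2 z.1 : EReal) ≤ h z) (haux : AuxCond h)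
    {v : X × (X →L[ℝ] ℝ)} {δ : ℝ} (hδ : 0 < δ) (hv : h v ≤ (v.2 v.1 + δ ^ 2 : ℝ)) :
    ∃ v', h v' ≤ (v'.2 v'.1 + (δ / 2) ^ 2 : ℝ) ∧ dist v v' ≤ 3 * δ := by
  obtain ⟨p, hp⟩ := haux.exists_lt v (by positivity : 0 < (δ / 2) ^ 2)
  have hρ := pairingAddHalfNormSq_nonneg p
  refine ⟨p + v, hp.le.trans (EReal.coe_le_coe_iff.2 (by linarith)), ?_⟩
  -- comparing `h` at `p + v` and at `v` through their midpoint bounds `p`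
  have hmid := neg_pairing_sub_le hc hge (α := (δ / 2) ^ 2 - pairingAddHalfNormSq p)
    (EReal.coe_le_coe_iff.2 (by linarith) |>.trans' hp.le) hv
  rw [add_sub_cancel_right] at hmid
  have hsq := sq_norm_le_pairing_add p
  unfold pairingAddHalfNormSq at hmid
  rw [dist_comm, dist_eq_norm, add_sub_cancel_right]
  nlinarith [norm_nonneg p]

theorem MaximalMonotone.nonempty (hT : MaximalMonotone T) : T.Nonempty := by
  by_contra hne
  rw [Set.not_nonempty_iff_eq_empty] at hne
  have hzero : MonotoneSet ({0} : Set (X × (X →L[ℝ] ℝ))) := by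
    rintro p rfl q rfl
    simp
  exact Set.singleton_ne_empty _ (hne ▸ hT.2 _ hzero (hne ▸ Set.empty_subset _))

theorem MaximalMonotone.mem_of_le (hT : MaximalMonotone T) (hc : ConvexE h)
    (hge : ∀ z : X × (X →L[ℝ] ℝ), (z.2 z.1 : EReal) ≤ h z)
    (hhT : ∀ t ∈ T, h t = (t.2 t.1 : EReal)) {z : X × (X →L[ℝ] ℝ)}
    (hz : h z ≤ (z.2 z.1 : EReal)) : z ∈ T := by
  have hrel : ∀ t ∈ T, 0 ≤ (z - t).2 (z - t).1 := fun t ht => by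
    have := neg_pairing_sub_le hc hge (α := 0) (β := 0) (by simpa using hz)
      (by simpa using (hhT t ht).le)
    linarith
  have hmono : MonotoneSet (insert z T) := by
    rintro p (rfl | hp) q (rfl | hq)
    · simp
    · exact hrel q hq
    · have hp' := hrel p hp
      rw [← neg_sub] at hp'
      simpa only [Prod.fst_neg, Prod.snd_neg, map_neg, neg_apply, neg_neg, Prod.fst_sub,
        Prod.snd_sub] using hp'
    · exact hT.1 p hp q hq
  exact hT.2 _ hmono (Set.subset_insert _ _) ▸ Set.mem_insert z T

theorem MaximalMonotone.exists_mem_dist_le [CompleteSpace X] (hT : MaximalMonotone T)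
    (hc : ConvexE h) (hlsc : LowerSemicontinuous h)
    (hge : ∀ z : X × (X →L[ℝ] ℝ), (z.2 z.1 : EReal) ≤ h z)
    (hhT : ∀ t ∈ T, h t = (t.2 t.1 : EReal)) (haux : AuxCond h) {v : X × (X →L[ℝ] ℝ)}
    {δ : ℝ} (hδ : 0 < δ) (hv : h v ≤ (v.2 v.1 + δ ^ 2 : ℝ)) :
    ∃ t ∈ T, dist v t ≤ 6 * δ := by
  obtain ⟨u, t, hu, hlim, hdist⟩ := exists_tendsto_of_forall_exists_dist_le_geometric_two
    (P := fun n z => h z ≤ (z.2 z.1 + (δ / 2 ^ n) ^ 2 : ℝ)) (C := 6 * δ) (by simpa using hv)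
    fun n z hz => by
      obtain ⟨z', hz', hd⟩ := exists_dist_le_of_le_pairing_add_sq hc hge haux
        (by positivity) hz
      exact ⟨z', by rwa [pow_succ 2 n, ← div_div], hd.trans_eq (by ring)⟩
  refine ⟨t, hT.mem_of_le hc hge hhT ?_, hdist⟩
  refine hlsc.le_of_tendsto hlim ?_ (Eventually.of_forall hu)
  have hpairing : Continuous fun z : X × (X →L[ℝ] ℝ) => z.2 z.1 :=
    continuous_snd.clm_apply continuous_fst
  have hradius : Tendsto (fun n : ℕ => (δ / 2 ^ n) ^ 2) atTop (𝓝 0) := by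
    have hhalf := tendsto_pow_atTop_nhds_zero_of_lt_one (by norm_num : (0 : ℝ) ≤ 1 / 2)
      (by norm_num)
    simpa [div_eq_mul_inv] using (hhalf.const_mul δ).pow 2
  have hbound := (continuous_coe_real_ereal.tendsto _).comp
    (((hpairing.tendsto t).comp hlim).add hradius)
  rwa [add_zero] at hbound

theorem MaximalMonotone.exists_mem_pairingAddHalfNormSq_sub_le [CompleteSpace X]
    (hT : MaximalMonotone T) (hh : h ∈ FitzFamily T) (haux : AuxCond h)
    (w : X × (X →L[ℝ] ℝ)) {ε : ℝ} (hε : 0 < ε) :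
    ∃ t ∈ T, pairingAddHalfNormSq (t - w) ≤ ε := by
  obtain ⟨hc, hlsc, hge, hhT⟩ := hh
  obtain ⟨t₀, ht₀⟩ := hT.nonempty
  set R := 5 * ‖w - t₀‖ + 2
  set δ := min 1 (ε / (24 * R + 73))
  have hδ : 0 < δ := lt_min one_pos (by positivity)
  have hδ₁ : δ ≤ 1 := min_le_left _ _
  have hδε : δ * (24 * R + 73) ≤ ε := (le_div_iff₀ (by positivity)).1 (min_le_right _ _)
  obtain ⟨p, hp⟩ := haux.exists_lt w (by positivity : 0 < δ ^ 2)
  have hρ : pairingAddHalfNormSq p < δ ^ 2 := by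
    have := (hge (p + w)).trans_lt hp
    rw [EReal.coe_lt_coe_iff] at this
    linarith
  -- the midpoint of `p + w` and `t₀ ∈ T` keeps the near-minimiser `p` in a fixed ball
  have hpR : ‖p‖ ≤ R := by
    have hmid := neg_pairing_sub_le hc hge (α := δ ^ 2 - pairingAddHalfNormSq p) (β := 0)
      (by rw [← add_sub_assoc]; exact hp.le) (by simpa using (hhT t₀ ht₀).le)
    rw [add_sub_assoc] at hmid
    exact norm_le_of_two_mul_pairingAddHalfNormSq_le (by nlinarith)
  obtain ⟨t, ht, hdist⟩ := hT.exists_mem_dist_le hc hlsc hge hhT haux hδ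
    (hp.le.trans (EReal.coe_le_coe_iff.2 (by linarith [pairingAddHalfNormSq_nonneg p])))
  refine ⟨t, ht, ?_⟩
  have hts : ‖t - w - p‖ ≤ 6 * δ := by
    rwa [sub_sub, add_comm w, ← dist_eq_norm, dist_comm]
  have := pairingAddHalfNormSq_le_of_norm_sub_le hts hpR
  nlinarith

theorem auxCond_of_forall_exists_mem {g : X × (X →L[ℝ] ℝ) → EReal}
    (hge : ∀ z : X × (X →L[ℝ] ℝ), (z.2 z.1 : EReal) ≤ g z)
    (hgT : ∀ t ∈ T, g t = (t.2 t.1 : EReal))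
    (hT : ∀ w : X × (X →L[ℝ] ℝ), ∀ ε > 0, ∃ t ∈ T, pairingAddHalfNormSq (t - w) ≤ ε) :
    AuxCond g := by
  intro w
  simp_rw [transl_add_halfNormSq]
  apply le_antisymm
  · refine le_of_forall_gt_imp_ge_of_dense fun a ha => ?_
    obtain ⟨ε, hε, hεa⟩ := EReal.lt_iff_exists_real_btwn.1 ha
    obtain ⟨t, ht, hρ⟩ := hT w ε (EReal.coe_pos.1 hε)
    refine (iInf_le _ (t - w)).trans (le_trans ?_ hεa.le)
    rw [sub_add_cancel, hgT t ht, ← EReal.coe_add, add_sub_cancel]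
    exact EReal.coe_le_coe_iff.2 hρ
  · refine le_iInf fun p => ?_
    calc (0 : EReal) ≤ pairingAddHalfNormSq p :=
          EReal.coe_nonneg.2 (pairingAddHalfNormSq_nonneg p)
      _ = ((p + w).2 (p + w).1 : EReal)
            + ((pairingAddHalfNormSq p - (p + w).2 (p + w).1 : ℝ) : EReal) := by
        rw [← EReal.coe_add, add_sub_cancel]
      _ ≤ g (p + w) + ((pairingAddHalfNormSq p - (p + w).2 (p + w).1 : ℝ) : EReal) :=
        add_le_add_left (hge _) _

end

theorem stmt_8 {X : Type*} [NormedAddCommGroup X] [NormedSpace ℝ X] [CompleteSpace X]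
    (T : Set (X × (X →L[ℝ] ℝ))) (hT : MaximalMonotone T)
    (h : X × (X →L[ℝ] ℝ) → EReal) (hh : h ∈ FitzFamily T) (haux : AuxCond h) :
    ∀ g ∈ FitzFamily T, AuxCond g := fun _ ⟨_, _, hge, hgT⟩ =>
  auxCond_of_forall_exists_mem hge hgT fun w _ hε =>
    hT.exists_mem_pairingAddHalfNormSq_sub_le hh haux w hε

end
end

section
/- Let T : X ⇉ X* be maximal monotone and of type (NI). Then every h ∈ F_T satisfies h*(x*,x**) ≥ ⟨x*,x**⟩ for all (x*,x**) ∈ X* × X** and, for every (x₀,x₀*) ∈ X × X*, inf_{(x,x*)∈X×X*} ( h_{(x₀,x₀*)}(x,x*) + ½‖x‖² + ½‖x*‖² ) = 0. -/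
noncomputable section

open NormedSpace

-- helper: approach from below in EReal
lemma ereal_le_of_forall_sub (x : ℝ) (S : EReal)
    (h : ∀ ε : ℝ, 0 < ε → ((x - ε : ℝ) : EReal) ≤ S) : (x : EReal) ≤ S := by
  by_contra hc
  push_neg at hc
  induction S using EReal.rec with
  | bot => exact EReal.coe_ne_bot _ (le_bot_iff.mp (h 1 one_pos))
  | coe s =>
      have hs : s < x := EReal.coe_lt_coe_iff.mp hc
      have := h ((x - s)/2) (by linarith)
      rw [EReal.coe_le_coe_iff] at this; linarith
  | top => exact absurd hc (by simp)

-- helper: finite sandwich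
lemma ereal_finite_sandwich {x : EReal} {lb ub : ℝ} (h1 : (lb : EReal) ≤ x)
    (h2 : x ≤ (ub : EReal)) : ∃ ρ : ℝ, x = (ρ : EReal) ∧ lb ≤ ρ ∧ ρ ≤ ub := by
  have hbot : x ≠ ⊥ := fun hx => by simp [hx] at h1
  have htop : x ≠ ⊤ := fun hx => by simp [hx] at h2
  refine ⟨x.toReal, (EReal.coe_toReal htop hbot).symm, ?_, ?_⟩
  · rw [← EReal.coe_toReal htop hbot] at h1; exact EReal.coe_le_coe_iff.mp h1
  · rw [← EReal.coe_toReal htop hbot] at h2; exact EReal.coe_le_coe_iff.mp h2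

-- from an EReal iInf ≤ 0, find an index with small value
lemma exists_lt_of_iInf_le_zero {ι : Sort*} {d : ι → ℝ} {ε : ℝ} (hε : 0 < ε)
    (h : (⨅ i, ((d i : ℝ) : EReal)) ≤ 0) : ∃ i, d i < ε := by
  by_contra hc
  push_neg at hc
  have : ((ε : ℝ) : EReal) ≤ ⨅ i, ((d i : ℝ) : EReal) :=
    le_iInf fun i => EReal.coe_le_coe_iff.mpr (hc i)
  have : ((ε : ℝ) : EReal) ≤ 0 := this.trans h
  have : ε ≤ 0 := by exact_mod_cast this
  linarith

-- norming-point lemma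
lemma exists_norming {Y : Type*} [NormedAddCommGroup Y] [NormedSpace ℝ Y]
    (φ : Y →L[ℝ] ℝ) {δ : ℝ} (hδ : 0 < δ) :
    ∃ y : Y, φ y + ‖y‖ ^ 2 / 2 ≤ -(‖φ‖ ^ 2) / 2 + δ := by
  rcases eq_or_lt_of_le (norm_nonneg φ) with h0 | h0
  · refine ⟨0, ?_⟩
    simp [← h0]
    linarith
  rcases lt_or_ge (‖φ‖ ^ 2) δ with hsmall | hbig
  · exact ⟨0, by simp; nlinarith⟩
  have hr : ‖φ‖ - δ / ‖φ‖ < ‖φ‖ := by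
    have : 0 < δ / ‖φ‖ := div_pos hδ h0
    linarith
  obtain ⟨x, hx1, hx2⟩ := φ.exists_lt_apply_of_lt_opNorm hr
  set x' : Y := if 0 ≤ φ x then x else -x with hx'
  have hφx' : ‖φ‖ - δ / ‖φ‖ < φ x' := by
    rw [hx']
    split_ifs with hsign
    · rwa [Real.norm_eq_abs, abs_of_nonneg hsign] at hx2
    · rw [map_neg]; rwa [Real.norm_eq_abs, abs_of_neg (lt_of_not_ge hsign)] at hx2
  have hnx' : ‖x'‖ < 1 := by rw [hx']; split_ifs <;> simpa
  refine ⟨(-‖φ‖) • x', ?_⟩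
  have h1 : φ ((-‖φ‖) • x') = -‖φ‖ * φ x' := by simp
  have h2 : ‖(-‖φ‖) • x'‖ = ‖φ‖ * ‖x'‖ := by
    rw [norm_smul, Real.norm_eq_abs, abs_neg, abs_of_nonneg (norm_nonneg φ)]
  rw [h1, h2]
  have hφδ : ‖φ‖ * (δ / ‖φ‖) = δ := by field_simp
  have hxnn : (0:ℝ) ≤ ‖x'‖ := norm_nonneg _
  have hx2' : ‖x'‖ ^ 2 ≤ 1 := by nlinarith
  have h3 : (‖φ‖ * ‖x'‖) ^ 2 ≤ ‖φ‖ ^ 2 := by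
    nlinarith [mul_le_mul_of_nonneg_left hx2' (sq_nonneg ‖φ‖)]
  have h4 := mul_lt_mul_of_pos_left hφx' h0
  rw [mul_sub, hφδ] at h4
  nlinarith [h3, h4]

section Helper

variable {X : Type*} [NormedAddCommGroup X] [NormedSpace ℝ X]

/-- lower bound for the translate. -/
lemma transl_ge {h : X × (X →L[ℝ] ℝ) → EReal} (hge : ∀ p : X × (X →L[ℝ] ℝ), (p.2 p.1 : EReal) ≤ h p)
    (w p : X × (X →L[ℝ] ℝ)) : ((p.2 p.1 : ℝ) : EReal) ≤ transl h w p := by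
  unfold transl
  have h1 : (((p.2 + w.2) (p.1 + w.1) : ℝ) : EReal) ≤ h (p.1 + w.1, p.2 + w.2) := hge (p.1 + w.1, p.2 + w.2)
  have h2 : ((p.2 + w.2) (p.1 + w.1) : ℝ) - (w.2 p.1 + p.2 w.1 + w.2 w.1) = p.2 p.1 := by
    simp [ContinuousLinearMap.add_apply, map_add]; ring
  calc ((p.2 p.1 : ℝ) : EReal)
      = (((((p.2 + w.2) (p.1 + w.1) : ℝ)) : EReal) - ((w.2 p.1 + p.2 w.1 + w.2 w.1 : ℝ) : EReal)) := by
        rw [← EReal.coe_sub, h2]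
    _ ≤ _ := EReal.sub_le_sub h1 le_rfl


lemma ereal_sub_coe_eq {x : EReal} {r ρ : ℝ} (h : x - (r : EReal) = (ρ : EReal)) :
    x = ((ρ + r : ℝ) : EReal) := by
  have hx : x = (x - (r : EReal)) + (r : EReal) := by
    rw [sub_eq_add_neg, add_assoc, ← EReal.coe_neg, ← EReal.coe_add, neg_add_cancel,
      EReal.coe_zero, add_zero]
  rw [hx, h, ← EReal.coe_add]

lemma transl_eval {h : X × (X →L[ℝ] ℝ) → EReal} (w t : X × (X →L[ℝ] ℝ))
    (hht : h t = ((t.2 t.1 : ℝ) : EReal)) :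
    transl h w (t.1 - w.1, t.2 - w.2) =
      ((t.2 t.1 - (w.2 (t.1 - w.1) + (t.2 - w.2) w.1 + w.2 w.1) : ℝ) : EReal) := by
  unfold transl
  simp only [sub_add_cancel]
  rw [show ((t.1, t.2) : X × (X →L[ℝ] ℝ)) = t from rfl, hht, ← EReal.coe_sub]

lemma transl_convex_ineq {h : X × (X →L[ℝ] ℝ) → EReal} (hconv : ConvexE h)
    (w p q : X × (X →L[ℝ] ℝ)) {a b : ℝ} (ha : 0 ≤ a) (hb : 0 ≤ b) (hab : a + b = 1)
    {ρ σ : ℝ} (hp : transl h w p = (ρ : EReal)) (hq : transl h w q = (σ : EReal)) :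
    transl h w (a • p + b • q) ≤ ((a * ρ + b * σ : ℝ) : EReal) := by
  set Lp : ℝ := w.2 p.1 + p.2 w.1 + w.2 w.1 with hLp
  set Lq : ℝ := w.2 q.1 + q.2 w.1 + w.2 w.1 with hLq
  have hp' : h (p.1 + w.1, p.2 + w.2) = ((ρ + Lp : ℝ) : EReal) := ereal_sub_coe_eq hp
  have hq' : h (q.1 + w.1, q.2 + w.2) = ((σ + Lq : ℝ) : EReal) := ereal_sub_coe_eq hq
  have hpoint : ((a • p + b • q).1 + w.1, (a • p + b • q).2 + w.2)
      = a • ((p.1 + w.1, p.2 + w.2) : X × (X →L[ℝ] ℝ)) + b • (q.1 + w.1, q.2 + w.2) := by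
    have h1 : (a • p + b • q).1 + w.1 = a • (p.1 + w.1) + b • (q.1 + w.1) := by
      simp only [Prod.fst_add, Prod.smul_fst, smul_add]
      rw [show a • p.1 + a • w.1 + (b • q.1 + b • w.1)
            = a • p.1 + b • q.1 + (a • w.1 + b • w.1) by abel, ← add_smul, hab, one_smul]
    have h2 : (a • p + b • q).2 + w.2 = a • (p.2 + w.2) + b • (q.2 + w.2) := by
      simp only [Prod.snd_add, Prod.smul_snd, smul_add]
      rw [show a • p.2 + a • w.2 + (b • q.2 + b • w.2)
            = a • p.2 + b • q.2 + (a • w.2 + b • w.2) by abel, ← add_smul, hab, one_smul]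
    rw [Prod.ext_iff]
    exact ⟨h1, h2⟩
  have hcz : h ((a • p + b • q).1 + w.1, (a • p + b • q).2 + w.2)
      ≤ ((a * (ρ + Lp) + b * (σ + Lq) : ℝ) : EReal) := by
    rw [hpoint]
    calc h (a • ((p.1 + w.1, p.2 + w.2) : X × (X →L[ℝ] ℝ)) + b • (q.1 + w.1, q.2 + w.2))
        ≤ (a : EReal) * h (p.1 + w.1, p.2 + w.2) + (b : EReal) * h (q.1 + w.1, q.2 + w.2) :=
          hconv _ _ a b ha hb hab
      _ = ((a * (ρ + Lp) + b * (σ + Lq) : ℝ) : EReal) := by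
          rw [hp', hq', ← EReal.coe_mul, ← EReal.coe_mul, ← EReal.coe_add]
  have hLz : (w.2 (a • p + b • q).1 + (a • p + b • q).2 w.1 + w.2 w.1 : ℝ)
      = a * Lp + b * Lq := by
    simp only [Prod.fst_add, Prod.smul_fst, Prod.snd_add, Prod.smul_snd, map_add, map_smul,
      ContinuousLinearMap.add_apply, ContinuousLinearMap.coe_smul', Pi.smul_apply,
      smul_eq_mul, hLp, hLq]
    have : (a + b) * (w.2 w.1) = w.2 w.1 := by rw [hab, one_mul]
    nlinarith [this]
  calc transl h w (a • p + b • q)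
      = h ((a • p + b • q).1 + w.1, (a • p + b • q).2 + w.2)
        - ((w.2 (a • p + b • q).1 + (a • p + b • q).2 w.1 + w.2 w.1 : ℝ) : EReal) := rfl
    _ ≤ ((a * (ρ + Lp) + b * (σ + Lq) : ℝ) : EReal)
        - ((w.2 (a • p + b • q).1 + (a • p + b • q).2 w.1 + w.2 w.1 : ℝ) : EReal) :=
        EReal.sub_le_sub hcz le_rfl
    _ = ((a * ρ + b * σ : ℝ) : EReal) := by
        rw [hLz, ← EReal.coe_sub]
        norm_cast
        ring

lemma part1 {T : Set (X × (X →L[ℝ] ℝ))} (hNI : TypeNI T)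
    {h : X × (X →L[ℝ] ℝ) → EReal}
    (hT4 : ∀ p ∈ T, h p = ((p.2 p.1 : ℝ) : EReal))
    (q : (X →L[ℝ] ℝ) × ((X →L[ℝ] ℝ) →L[ℝ] ℝ)) : ((q.2 q.1 : ℝ) : EReal) ≤ conj h q := by
  apply ereal_le_of_forall_sub
  intro ε hε
  obtain ⟨t, ht⟩ := exists_lt_of_iInf_le_zero hε (hNI q)
  have hident : q.1 t.1.1 + q.2 t.1.2 - t.1.2 t.1.1
      = q.2 q.1 - (q.2 - NormedSpace.inclusionInDoubleDual ℝ X t.1.1) (q.1 - t.1.2) := by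
    simp only [ContinuousLinearMap.sub_apply, map_sub, NormedSpace.dual_def]
    ring
  calc ((q.2 q.1 - ε : ℝ) : EReal)
      ≤ ((q.1 t.1.1 + q.2 t.1.2 - t.1.2 t.1.1 : ℝ) : EReal) := by
        rw [EReal.coe_le_coe_iff, hident]; linarith
    _ = ((q.1 t.1.1 + q.2 t.1.2 : ℝ) : EReal) - h t.1 := by
        rw [hT4 t.1 t.2, ← EReal.coe_sub]
    _ ≤ conj h q := le_iSup (fun p : X × (X →L[ℝ] ℝ) =>
        (((q.1 p.1 + q.2 p.2 : ℝ) : EReal) - h p)) t.1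

lemma real_le_of_forall_add {a b : ℝ} (h : ∀ ε : ℝ, 0 < ε → a ≤ b + ε) : a ≤ b := by
  by_contra hc
  push_neg at hc
  have := h ((a - b)/2) (by linarith)
  linarith

lemma hnsmul_lemma {Y : Type*} [NormedAddCommGroup Y] [NormedSpace ℝ Y]
    {a b : ℝ} (ha : 0 ≤ a) (hb : 0 ≤ b) (y y' : Y) :
    ‖a • y + b • y'‖ ≤ a * ‖y‖ + b * ‖y'‖ := by
  calc ‖a • y + b • y'‖ ≤ ‖a • y‖ + ‖b • y'‖ := norm_add_le _ _
    _ = a * ‖y‖ + b * ‖y'‖ := by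
        rw [norm_smul a y, norm_smul b y', Real.norm_eq_abs, Real.norm_eq_abs,
          abs_of_nonneg ha, abs_of_nonneg hb]

set_option maxHeartbeats 2000000 in
lemma part2 {T : Set (X × (X →L[ℝ] ℝ))} (hNI : TypeNI T)
    {h : X × (X →L[ℝ] ℝ) → EReal} (hconv : ConvexE h)
    (hge : ∀ p : X × (X →L[ℝ] ℝ), (p.2 p.1 : EReal) ≤ h p)
    (hT4 : ∀ p ∈ T, h p = ((p.2 p.1 : ℝ) : EReal)) : AuxCond h := by
  intro w
  set jj : X × (X →L[ℝ] ℝ) → ℝ := fun p => ‖p.1‖ ^ 2 / 2 + ‖p.2‖ ^ 2 / 2 with hjj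
  -- T is nonempty
  have hTne : T.Nonempty := by
    by_contra hc
    rw [Set.not_nonempty_iff_eq_empty] at hc
    have he : IsEmpty (↥T) := Set.isEmpty_coe_sort.mpr hc
    have h0 := hNI 0
    rw [iInf_of_empty] at h0
    exact absurd h0 (by simp)
  obtain ⟨t₀, ht₀⟩ := hTne
  -- each term is nonnegative
  have hlow : ∀ p : X × (X →L[ℝ] ℝ),
      (0 : EReal) ≤ transl h w p + ((jj p : ℝ) : EReal) := by
    intro p
    have h1 : (0 : ℝ) ≤ p.2 p.1 + jj p := by
      have h2 := p.2.le_opNorm p.1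
      rw [Real.norm_eq_abs] at h2
      have h3 := neg_abs_le (p.2 p.1)
      simp only [hjj]
      nlinarith [sq_nonneg (‖p.1‖ - ‖p.2‖), norm_nonneg p.1, norm_nonneg p.2]
    calc (0 : EReal) ≤ ((p.2 p.1 + jj p : ℝ) : EReal) := by exact_mod_cast h1
      _ = ((p.2 p.1 : ℝ) : EReal) + ((jj p : ℝ) : EReal) := EReal.coe_add _ _
      _ ≤ transl h w p + ((jj p : ℝ) : EReal) := add_le_add (transl_ge hge w p) le_rfl
  refine le_antisymm ?_ (le_iInf hlow)
  by_contra h0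
  push_neg at h0
  -- the infimum m is a positive real α
  set m := ⨅ p : X × (X →L[ℝ] ℝ), (transl h w p + ((jj p : ℝ) : EReal)) with hm
  set p₀ : X × (X →L[ℝ] ℝ) := (t₀.1 - w.1, t₀.2 - w.2) with hp₀
  set r₀ : ℝ := t₀.2 t₀.1 - (w.2 p₀.1 + p₀.2 w.1 + w.2 w.1) with hr₀
  have htr₀ : transl h w p₀ = ((r₀ : ℝ) : EReal) := transl_eval w t₀ (hT4 t₀ ht₀)
  have hm_le : m ≤ ((r₀ + jj p₀ : ℝ) : EReal) := by
    have := iInf_le (fun p : X × (X →L[ℝ] ℝ) => transl h w p + ((jj p : ℝ) : EReal)) p₀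
    rwa [htr₀, ← EReal.coe_add] at this
  have hmtop : m ≠ ⊤ := fun hmt => by rw [hmt] at hm_le; exact (EReal.coe_ne_top _) (top_le_iff.mp hm_le)
  have hmbot : m ≠ ⊥ := fun hmb => by rw [hmb] at h0; exact absurd h0 (by simp)
  set α : ℝ := m.toReal with hαdef
  have hαm : ((α : ℝ) : EReal) = m := EReal.coe_toReal hmtop hmbot
  have hα : 0 < α := by
    rw [← hαm] at h0
    exact_mod_cast h0
  -- the key real inequality from the infimum
  have hkey : ∀ (p : X × (X →L[ℝ] ℝ)) (t : ℝ), transl h w p ≤ ((t : ℝ) : EReal) → α ≤ t + jj p := by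
    intro p t hle
    have h1 : ((α : ℝ) : EReal) ≤ transl h w p + ((jj p : ℝ) : EReal) := by
      rw [hαm]; exact iInf_le _ p
    have h2 : transl h w p + ((jj p : ℝ) : EReal) ≤ ((t + jj p : ℝ) : EReal) := by
      rw [EReal.coe_add]; exact add_le_add hle le_rfl
    exact_mod_cast h1.trans h2
  -- the two convex sets
  have hBopen : IsOpen {z : (X × (X →L[ℝ] ℝ)) × ℝ | z.2 + jj z.1 < α} := by
    have hcont : Continuous fun z : (X × (X →L[ℝ] ℝ)) × ℝ => z.2 + jj z.1 := by
      apply continuous_snd.add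
      simp only [hjj]
      exact (((continuous_fst.fst.norm).pow 2).div_const 2).add
        (((continuous_fst.snd.norm).pow 2).div_const 2)
    exact isOpen_Iio.preimage hcont
  have hBconv : Convex ℝ {z : (X × (X →L[ℝ] ℝ)) × ℝ | z.2 + jj z.1 < α} := by
    intro z hz z' hz' a b ha hb hab
    simp only [Set.mem_setOf_eq] at hz hz' ⊢
    have hcomb : a * (z.2 + jj z.1) + b * (z'.2 + jj z'.1) < α := by
      have := (convex_Iio (α : ℝ)) hz hz' ha hb hab
      simpa [smul_eq_mul] using this
    have hn1 := hnsmul_lemma ha hb z.1.1 z'.1.1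
    have hn2 := hnsmul_lemma ha hb z.1.2 z'.1.2
    have hsq : ∀ r s r' : ℝ, 0 ≤ r → 0 ≤ s → 0 ≤ r' → r' ≤ a * r + b * s →
        r' ^ 2 ≤ a * r ^ 2 + b * s ^ 2 := by
      intro r s r' hr hs hr' hle
      have h1 : r' ^ 2 ≤ (a * r + b * s) ^ 2 := by nlinarith
      nlinarith [sq_nonneg (r - s), mul_nonneg ha hb]
    have hjjle : jj (a • z.1 + b • z'.1) ≤ a * jj z.1 + b * jj z'.1 := by
      simp only [hjj, Prod.fst_add, Prod.smul_fst, Prod.snd_add, Prod.smul_snd]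
      have e1 := hsq ‖z.1.1‖ ‖z'.1.1‖ ‖a • z.1.1 + b • z'.1.1‖ (norm_nonneg _)
        (norm_nonneg _) (norm_nonneg _) hn1
      have e2 := hsq ‖z.1.2‖ ‖z'.1.2‖ ‖a • z.1.2 + b • z'.1.2‖ (norm_nonneg _)
        (norm_nonneg _) (norm_nonneg _) hn2
      linarith
    have h1 : (a • z + b • z').1 = a • z.1 + b • z'.1 := by
      simp [Prod.fst_add, Prod.smul_fst]
    have h2 : (a • z + b • z').2 = a * z.2 + b * z'.2 := by
      simp [Prod.snd_add, Prod.smul_snd, smul_eq_mul]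
    rw [h1, h2]
    nlinarith [hjjle, hcomb]
  have hAconv : Convex ℝ {z : (X × (X →L[ℝ] ℝ)) × ℝ | transl h w z.1 ≤ ((z.2 : ℝ) : EReal)} := by
    intro z hz z' hz' a b ha hb hab
    simp only [Set.mem_setOf_eq] at hz hz' ⊢
    obtain ⟨ρ, hρ, _, hρle⟩ := ereal_finite_sandwich (transl_ge hge w z.1) hz
    obtain ⟨ρ', hρ', _, hρ'le⟩ := ereal_finite_sandwich (transl_ge hge w z'.1) hz'
    have hcineq := transl_convex_ineq hconv w z.1 z'.1 ha hb hab hρ hρ'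
    have h1 : (a • z + b • z').1 = a • z.1 + b • z'.1 := by
      simp [Prod.fst_add, Prod.smul_fst]
    have h2 : (a • z + b • z').2 = a * z.2 + b * z'.2 := by
      simp [Prod.snd_add, Prod.smul_snd, smul_eq_mul]
    rw [h1, h2]
    refine hcineq.trans ?_
    rw [EReal.coe_le_coe_iff]
    nlinarith [mul_le_mul_of_nonneg_left hρle ha, mul_le_mul_of_nonneg_left hρ'le hb]
  have hdisj : Disjoint {z : (X × (X →L[ℝ] ℝ)) × ℝ | z.2 + jj z.1 < α}
      {z : (X × (X →L[ℝ] ℝ)) × ℝ | transl h w z.1 ≤ ((z.2 : ℝ) : EReal)} := by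
    rw [Set.disjoint_left]
    intro z hzB hzA
    simp only [Set.mem_setOf_eq] at hzB hzA
    have h1 : α ≤ z.2 + jj z.1 := hkey z.1 z.2 hzA
    linarith
  obtain ⟨f, u, hfB, hfA⟩ := geometric_hahn_banach_open hBconv hBopen hAconv hdisj
  simp only [Set.mem_setOf_eq] at hfB hfA
-- decompose f
  set g : X × (X →L[ℝ] ℝ) → ℝ := fun p => f (p, 0) with hg
  set c : ℝ := f (0, 1) with hcdef
  have hfdec : ∀ (p : X × (X →L[ℝ] ℝ)) (t : ℝ), f (p, t) = g p + t * c := by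
    intro p t
    have hsplit : ((p, t) : (X × (X →L[ℝ] ℝ)) × ℝ)
        = ((p, 0) : (X × (X →L[ℝ] ℝ)) × ℝ) + t • ((0, 1) : (X × (X →L[ℝ] ℝ)) × ℝ) := by
      rw [Prod.ext_iff]
      constructor
      · simp
      · simp
    rw [hsplit, map_add, map_smul, smul_eq_mul, hg, hcdef]
  -- membership facts rewritten
  have hfA' : ∀ (p : X × (X →L[ℝ] ℝ)) (t : ℝ), transl h w p ≤ ((t : ℝ) : EReal) →
      u ≤ g p + t * c := by
    intro p t hpt
    have := hfA (p, t) hpt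
    rwa [hfdec] at this
  have hfB' : ∀ (p : X × (X →L[ℝ] ℝ)) (t : ℝ), t + jj p < α → g p + t * c < u := by
    intro p t hpt
    have := hfB (p, t) hpt
    rwa [hfdec] at this
  have hjj0 : jj (0 : X × (X →L[ℝ] ℝ)) = 0 := by simp [hjj]
  -- c is positive
  have hcnonneg : 0 ≤ c := by
    by_contra hcneg
    push_neg at hcneg
    set t : ℝ := min (α - 1) ((u - g 0) / c) with ht
    have htB : t + jj (0 : X × (X →L[ℝ] ℝ)) < α := by
      rw [hjj0, add_zero]
      calc t ≤ α - 1 := min_le_left _ _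
        _ < α := by linarith
    have hlt := hfB' 0 t htB
    have hmul : ((u - g 0) / c) * c ≤ t * c :=
      mul_le_mul_of_nonpos_right (min_le_right _ _) hcneg.le
    rw [div_mul_cancel₀ _ (ne_of_lt hcneg)] at hmul
    linarith
  have hcne : c ≠ 0 := by
    intro hc0
    have h1 : u ≤ g p₀ + r₀ * c := hfA' p₀ r₀ (le_of_eq htr₀)
    have h2 : g p₀ + (α - jj p₀ - 1) * c < u := hfB' p₀ (α - jj p₀ - 1) (by linarith)
    rw [hc0] at h1 h2
    linarith
  have hc : 0 < c := lt_of_le_of_ne hcnonneg (Ne.symm hcne)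
  -- the separating functionals
  set ψ₁ : X →L[ℝ] ℝ := (-(c⁻¹)) • (f.comp (((ContinuousLinearMap.inl ℝ (X × (X →L[ℝ] ℝ)) ℝ)).comp
      (ContinuousLinearMap.inl ℝ X (X →L[ℝ] ℝ)))) with hψ₁def
  set ψ₂ : (X →L[ℝ] ℝ) →L[ℝ] ℝ := (-(c⁻¹)) • (f.comp (((ContinuousLinearMap.inl ℝ (X × (X →L[ℝ] ℝ)) ℝ)).comp
      (ContinuousLinearMap.inr ℝ X (X →L[ℝ] ℝ)))) with hψ₂def
  have hψ₁ : ∀ x : X, ψ₁ x = -(c⁻¹) * f ((x, 0), 0) := by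
    intro x
    simp [hψ₁def, ContinuousLinearMap.smul_apply, ContinuousLinearMap.comp_apply,
      ContinuousLinearMap.inl_apply, smul_eq_mul]
  have hψ₂ : ∀ y : X →L[ℝ] ℝ, ψ₂ y = -(c⁻¹) * f ((0, y), 0) := by
    intro y
    simp [hψ₂def, ContinuousLinearMap.smul_apply, ContinuousLinearMap.comp_apply,
      ContinuousLinearMap.inl_apply, ContinuousLinearMap.inr_apply, smul_eq_mul]
  have hgψ : ∀ p : X × (X →L[ℝ] ℝ), ψ₁ p.1 + ψ₂ p.2 = -(c⁻¹) * g p := by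
    intro p
    have hsplit : ((p, 0) : (X × (X →L[ℝ] ℝ)) × ℝ)
        = (((p.1, 0), 0) : (X × (X →L[ℝ] ℝ)) × ℝ) + ((0, p.2), 0) := by
      rw [Prod.ext_iff]
      constructor
      · rw [Prod.ext_iff]; constructor <;> simp
      · simp
    have hgp : g p = f ((p.1, 0), 0) + f ((0, p.2), 0) := by
      rw [hg]; simp only; rw [hsplit, map_add]
    rw [hψ₁ p.1, hψ₂ p.2, hgp]; ring
  set q' : (X →L[ℝ] ℝ) × ((X →L[ℝ] ℝ) →L[ℝ] ℝ) :=
      (ψ₁ + w.2, ψ₂ + inclusionInDoubleDual ℝ X w.1) with hq'def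
  have hstar : ∀ t : ↥T, ψ₂ ψ₁ + u / c
      ≤ (q'.2 - inclusionInDoubleDual ℝ X t.1.1) (q'.1 - t.1.2) := by
    intro t
    set p : X × (X →L[ℝ] ℝ) := (t.1.1 - w.1, t.1.2 - w.2) with hpdef
    set r : ℝ := t.1.2 t.1.1 - (w.2 p.1 + p.2 w.1 + w.2 w.1) with hrdef
    have htr : transl h w p = ((r : ℝ) : EReal) := transl_eval w t.1 (hT4 t.1 t.2)
    have hu : u ≤ g p + r * c := hfA' p r (le_of_eq htr)
    have hψp : ψ₁ p.1 + ψ₂ p.2 = -(c⁻¹) * g p := hgψ p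
    have hident : (q'.2 - inclusionInDoubleDual ℝ X t.1.1) (q'.1 - t.1.2)
        = ψ₂ ψ₁ - (ψ₁ p.1 + ψ₂ p.2) + r := by
      simp only [hq'def, hpdef, hrdef, ContinuousLinearMap.sub_apply,
        ContinuousLinearMap.add_apply, map_sub, map_add, NormedSpace.dual_def]
      ring
    rw [hident, hψp]
    have hmul := mul_le_mul_of_nonneg_right hu (inv_nonneg.mpr hc.le)
    have hrc : r * c * c⁻¹ = r := by field_simp
    rw [div_eq_mul_inv]
    nlinarith [hmul, hrc]
  have hβ : ψ₂ ψ₁ + u / c ≤ 0 := by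
    have hle : ((ψ₂ ψ₁ + u / c : ℝ) : EReal)
        ≤ ⨅ t : ↥T, (((q'.2 - inclusionInDoubleDual ℝ X t.1.1) (q'.1 - t.1.2) : ℝ) : EReal) :=
      le_iInf fun t => EReal.coe_le_coe_iff.mpr (hstar t)
    have := hle.trans (hNI q')
    exact_mod_cast this
  have hαfinal : α ≤ u / c - (‖ψ₁‖ ^ 2 + ‖ψ₂‖ ^ 2) / 2 := by
    apply real_le_of_forall_add
    intro δ hδ
    obtain ⟨y₁, hy₁⟩ := exists_norming ψ₁ (half_pos hδ)
    obtain ⟨y₂, hy₂⟩ := exists_norming ψ₂ (half_pos hδ)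
    set p : X × (X →L[ℝ] ℝ) := (y₁, y₂) with hpdef
    have hstep : (α - jj p) * c ≤ u - g p := by
      apply real_le_of_forall_add
      intro ε hε
      have hεc : 0 < ε / c := div_pos hε hc
      have hBm : (α - jj p - ε / c) + jj p < α := by linarith
      have hlt := hfB' p (α - jj p - ε / c) hBm
      have hcc : (ε / c) * c = ε := by field_simp
      have hexp : (α - jj p - ε / c) * c = (α - jj p) * c - (ε / c) * c := by ring
      rw [hcc] at hexp
      rw [hexp] at hlt
      linarith
    have hdiv : α - jj p ≤ (u - g p) / c := (le_div_iff₀ hc).mpr hstep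
    have hψp : ψ₁ y₁ + ψ₂ y₂ = -(c⁻¹) * g p := hgψ p
    have hjjp : jj p = ‖y₁‖ ^ 2 / 2 + ‖y₂‖ ^ 2 / 2 := by simp [hjj, hpdef]
    have hexp : (u - g p) / c = u / c + (ψ₁ y₁ + ψ₂ y₂) := by
      rw [hψp, div_eq_mul_inv, div_eq_mul_inv]; ring
    rw [hexp] at hdiv
    rw [hjjp] at hdiv
    linarith [hy₁, hy₂, hdiv]
  have habs : |ψ₂ ψ₁| ≤ ‖ψ₂‖ * ‖ψ₁‖ := by
    have := ψ₂.le_opNorm ψ₁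
    rwa [Real.norm_eq_abs] at this
  nlinarith [hβ, hαfinal, habs, neg_abs_le (ψ₂ ψ₁), sq_nonneg (‖ψ₁‖ - ‖ψ₂‖), hα]

end Helper

theorem stmt_9 {X : Type*} [NormedAddCommGroup X] [NormedSpace ℝ X] [CompleteSpace X]
    (T : Set (X × (X →L[ℝ] ℝ))) (hT : MaximalMonotone T) (hNI : TypeNI T) :
    ∀ h ∈ FitzFamily T,
      (∀ q : (X →L[ℝ] ℝ) × ((X →L[ℝ] ℝ) →L[ℝ] ℝ), (q.2 q.1 : EReal) ≤ conj h q) ∧ AuxCond h := by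
  intro h hh
  obtain ⟨hconv, _hlsc, hge, hT4⟩ := hh
  exact ⟨fun q => part1 hNI hT4 q, part2 hNI hconv hge hT4⟩

end
end

section
/- Let h : X × X* → ℝ∪{+∞} satisfy, for every (x₀,x₀*) ∈ X × X*, inf_{(x,x*)∈X×X*} ( h_{(x₀,x₀*)}(x,x*) + ½‖x‖² + ½‖x*‖² ) = 0. Then for every (y*,y**) ∈ X* × X** and every (z,z*) ∈ X × X*, h*(y*,y**) − ⟨y*,y**⟩ ≥ −½‖y*−z*‖² − ½‖y**−Jz‖² − ⟨y*−z*, y**−Jz⟩. -/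
noncomputable section

open NormedSpace

set_option maxHeartbeats 1000000 in
theorem stmt_17 {X : Type*} [NormedAddCommGroup X] [NormedSpace ℝ X] [CompleteSpace X]
    (h : X × (X →L[ℝ] ℝ) → EReal) (hbot : ∀ p, h p ≠ ⊥) (haux : AuxCond h) :
    ∀ (q : (X →L[ℝ] ℝ) × ((X →L[ℝ] ℝ) →L[ℝ] ℝ)) (z : X) (z' : X →L[ℝ] ℝ),
      ((-(‖q.1 - z'‖ ^ 2 / 2) - ‖q.2 - inclusionInDoubleDual ℝ X z‖ ^ 2 / 2 -
          (q.2 - inclusionInDoubleDual ℝ X z) (q.1 - z') : ℝ) : EReal) ≤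
        conj h q - (q.2 q.1 : EReal) := by
  intro q z z'
  set a := q.1 - z' with ha
  set b := q.2 - inclusionInDoubleDual ℝ X z with hb
  rw [EReal.le_sub_iff_add_le (Or.inl (EReal.coe_ne_bot _)) (Or.inl (EReal.coe_ne_top _)),
    ← EReal.coe_add]
  set x : ℝ := -(‖a‖ ^ 2 / 2) - ‖b‖ ^ 2 / 2 - b a + q.2 q.1 with hx
  have key : ∀ ε : ℝ, 0 < ε → ((x - ε : ℝ) : EReal) ≤ conj h q := by
    intro ε hε
    have h0 := haux (z, z')
    have hlt : (⨅ p : X × (X →L[ℝ] ℝ),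
        (transl h (z, z') p + ((‖p.1‖ ^ 2 / 2 + ‖p.2‖ ^ 2 / 2 : ℝ) : EReal))) < (ε : EReal) := by
      rw [h0]; exact_mod_cast hε
    obtain ⟨p, hp⟩ := iInf_lt_iff.mp hlt
    set r : X × (X →L[ℝ] ℝ) := (p.1 + z, p.2 + z') with hr
    have hpr : transl h (z, z') p =
        h r - ((z' p.1 + p.2 z + z' z : ℝ) : EReal) := rfl
    rw [hpr] at hp
    have hne_top : h r ≠ ⊤ := by
      intro ht
      rw [ht] at hp
      rw [EReal.top_sub_coe, EReal.top_add_coe] at hp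
      exact (not_top_lt : ¬ (⊤ : EReal) < (ε : EReal)) hp
    have hHr : ((h r).toReal : EReal) = h r := EReal.coe_toReal hne_top (hbot r)
    set H := (h r).toReal with hH
    rw [← hHr] at hp
    have hpR : H - (z' p.1 + p.2 z + z' z) + (‖p.1‖ ^ 2 / 2 + ‖p.2‖ ^ 2 / 2) < ε := by
      exact_mod_cast hp
    have hsup : ((q.1 r.1 + q.2 r.2 - H : ℝ) : EReal) ≤ conj h q := by
      have h1 := le_iSup (fun p : X × (X →L[ℝ] ℝ) =>
        (((q.1 p.1 + q.2 p.2 : ℝ) : EReal) - h p)) r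
      rw [← hHr, ← EReal.coe_sub] at h1
      exact h1
    refine le_trans ?_ hsup
    rw [EReal.coe_le_coe_iff]
    have ha1 : -(‖a‖ * ‖p.1‖) ≤ a p.1 := by
      have h2 := a.le_opNorm p.1
      rw [Real.norm_eq_abs] at h2
      have := neg_abs_le (a p.1)
      linarith
    have hb1 : -(‖b‖ * ‖p.2‖) ≤ b p.2 := by
      have h2 := b.le_opNorm p.2
      rw [Real.norm_eq_abs] at h2
      have := neg_abs_le (b p.2)
      linarith
    have hax : a p.1 = q.1 p.1 - z' p.1 := by
      simp [ha, ContinuousLinearMap.sub_apply]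
    have hbx : b p.2 = q.2 p.2 - p.2 z := by
      simp [hb, ContinuousLinearMap.sub_apply, NormedSpace.dual_def]
    have hba : b a = q.2 q.1 - q.2 z' - q.1 z + z' z := by
      simp [hb, ha, ContinuousLinearMap.sub_apply, map_sub, NormedSpace.dual_def]
      ring
    have hr1 : q.1 r.1 = q.1 p.1 + q.1 z := by rw [hr]; exact map_add q.1 p.1 z
    have hr2 : q.2 r.2 = q.2 p.2 + q.2 z' := by rw [hr]; exact map_add q.2 p.2 z'
    rw [hx, hr1, hr2]
    have hA : ‖a‖ * ‖p.1‖ ≤ ‖a‖ ^ 2 / 2 + ‖p.1‖ ^ 2 / 2 := by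
      nlinarith [sq_nonneg (‖a‖ - ‖p.1‖)]
    have hB2 : ‖b‖ * ‖p.2‖ ≤ ‖b‖ ^ 2 / 2 + ‖p.2‖ ^ 2 / 2 := by
      nlinarith [sq_nonneg (‖b‖ - ‖p.2‖)]
    linarith [ha1, hb1, hpR, hA, hB2]
  by_contra hcon
  push_neg at hcon
  rcases eq_or_ne (conj h q) ⊥ with hB | hB
  · have h3 := key 1 one_pos
    rw [hB, le_bot_iff] at h3
    exact EReal.coe_ne_bot _ h3
  · have hm : ((conj h q).toReal : EReal) = conj h q := EReal.coe_toReal (ne_top_of_lt hcon) hB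
    set m := (conj h q).toReal with hmd
    have hmx : m < x := by
      rw [← hm] at hcon; exact_mod_cast hcon
    clear_value m x
    have h4 := key ((x - m) / 2) (by linarith)
    rw [← hm, EReal.coe_le_coe_iff] at h4
    linarith
end
end

section
/- Let T : X ⇉ X* be maximal monotone. If every h ∈ F_T satisfies h*(x*,x**) ≥ ⟨x*,x**⟩ for all (x*,x**) ∈ X* × X**, then T is of type (NI): inf_{(y,y*)∈T} ⟨x*−y*, x**−Jy⟩ ≤ 0 for all (x*,x**) ∈ X* × X**. -/
noncomputable section

open NormedSpace

namespace Stmt19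

/-! EReal helper lemmas -/

lemma ereal_mul_mono (a : ℝ) (ha : 0 ≤ a) {x y : EReal} (h : x ≤ y) :
    (a : EReal) * x ≤ (a : EReal) * y := by
  rcases ha.eq_or_lt with rfl | ha
  · simp [EReal.zero_mul]
  · induction x with
    | bot => rw [EReal.coe_mul_bot_of_pos ha]; exact bot_le
    | coe x =>
      induction y with
      | bot => exact absurd h (by simp)
      | coe y =>
        rw [← EReal.coe_mul, ← EReal.coe_mul]
        exact_mod_cast mul_le_mul_of_nonneg_left (by exact_mod_cast h) ha.le
      | top => rw [EReal.coe_mul_top_of_pos ha]; exact le_top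
    | top =>
      rw [top_le_iff] at h; subst h; exact le_rfl

lemma ereal_sub_swap (a : ℝ) {C H : EReal} (hC : C ≠ ⊥) (hH : H ≠ ⊥)
    (h : (a : EReal) - C ≤ H) : (a : EReal) - H ≤ C := by
  induction H with
  | bot => exact absurd rfl hH
  | coe H =>
    induction C with
    | bot => exact absurd rfl hC
    | coe C =>
      rw [← EReal.coe_sub] at h ⊢
      rw [EReal.coe_le_coe_iff] at h ⊢
      linarith
    | top => exact le_top
  | top => rw [EReal.sub_top]; exact bot_le

lemma ereal_le_zero (x : EReal) (h : ∀ ε : ℝ, 0 < ε → x ≤ (ε : EReal)) : x ≤ 0 := by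
  by_contra hx
  push_neg at hx
  induction x with
  | bot => exact absurd bot_le (not_le_of_gt hx)
  | coe x =>
    have hx' : (0:ℝ) < x := by exact_mod_cast hx
    have := h (x/2) (by linarith)
    rw [EReal.coe_le_coe_iff] at this
    linarith
  | top =>
    have := h 1 one_pos
    exact EReal.coe_ne_top 1 (top_le_iff.mp this)

variable {X : Type*} [NormedAddCommGroup X] [NormedSpace ℝ X]

open Classical

/-- the coupling-plus-indicator function g -/
def gT (T : Set (X × (X →L[ℝ] ℝ))) : X × (X →L[ℝ] ℝ) → EReal :=
  fun p => if p ∈ T then ((p.2 p.1 : ℝ) : EReal) else ⊤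

/-- the lsc convex hull of `gT`, i.e. the biconjugate -/
def bigH (T : Set (X × (X →L[ℝ] ℝ))) : X × (X →L[ℝ] ℝ) → EReal :=
  fun p => ⨆ q : (X →L[ℝ] ℝ) × ((X →L[ℝ] ℝ) →L[ℝ] ℝ),
    (((q.1 p.1 + q.2 p.2 : ℝ) : EReal) - conj (gT T) q)

lemma nonempty_of_max {T : Set (X × (X →L[ℝ] ℝ))} (hT : MaximalMonotone T) :
    T.Nonempty := by
  by_contra hne
  rw [Set.not_nonempty_iff_eq_empty] at hne
  have h0 : MonotoneSet ({(0, 0)} : Set (X × (X →L[ℝ] ℝ))) := by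
    intro p hp q hq
    simp only [Set.mem_singleton_iff] at hp hq
    subst hp; subst hq; simp
  have := hT.2 _ h0 (by rw [hne]; exact Set.empty_subset _)
  rw [hne] at this
  exact absurd this (by simp [Set.eq_empty_iff_forall_notMem])

lemma conjgT_ne_bot {T : Set (X × (X →L[ℝ] ℝ))} (hne : T.Nonempty)
    (q : (X →L[ℝ] ℝ) × ((X →L[ℝ] ℝ) →L[ℝ] ℝ)) : conj (gT T) q ≠ ⊥ := by
  obtain ⟨p₀, hp₀⟩ := hne
  have h1 : (((q.1 p₀.1 + q.2 p₀.2 : ℝ) : EReal) - gT T p₀) ≤ conj (gT T) q :=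
    le_iSup (fun p => (((q.1 p.1 + q.2 p.2 : ℝ) : EReal) - gT T p)) p₀
  simp only [gT] at h1
  rw [if_pos hp₀, ← EReal.coe_sub] at h1
  exact fun hb => by rw [hb, le_bot_iff] at h1; exact EReal.coe_ne_bot _ h1

/-- value of conj gT at points of (the image in the bidual of) T -/
lemma conjgT_le {T : Set (X × (X →L[ℝ] ℝ))} (hmono : MonotoneSet T)
    {w : X × (X →L[ℝ] ℝ)} (hw : w ∈ T) :
    conj (gT T) (w.2, inclusionInDoubleDual ℝ X w.1) ≤ ((w.2 w.1 : ℝ) : EReal) := by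
  apply iSup_le
  intro p
  by_cases hp : p ∈ T
  · simp only [gT]
    rw [if_pos hp, ← EReal.coe_sub, EReal.coe_le_coe_iff]
    have := hmono w hw p hp
    simp only [ContinuousLinearMap.sub_apply, map_sub] at this
    simp only [NormedSpace.dual_def]
    nlinarith [this]
  · simp only [gT]
    rw [if_neg hp, EReal.sub_top]
    exact bot_le

/-- bigH dominates the Fitzpatrick function -/
lemma bigH_ge_fitz {T : Set (X × (X →L[ℝ] ℝ))} (hmono : MonotoneSet T)
    {w : X × (X →L[ℝ] ℝ)} (hw : w ∈ T) (p : X × (X →L[ℝ] ℝ)) :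
    ((w.2 p.1 + p.2 w.1 - w.2 w.1 : ℝ) : EReal) ≤ bigH T p := by
  have h1 : (((w.2 p.1 + (inclusionInDoubleDual ℝ X w.1) p.2 : ℝ) : EReal)
      - conj (gT T) (w.2, inclusionInDoubleDual ℝ X w.1)) ≤ bigH T p :=
    le_iSup (fun q : (X →L[ℝ] ℝ) × ((X →L[ℝ] ℝ) →L[ℝ] ℝ) =>
      (((q.1 p.1 + q.2 p.2 : ℝ) : EReal) - conj (gT T) q)) (w.2, inclusionInDoubleDual ℝ X w.1)
  refine le_trans ?_ h1
  have h2 := conjgT_le hmono hw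
  have h3 : (((w.2 p.1 + (inclusionInDoubleDual ℝ X w.1) p.2 : ℝ) : EReal)
      - ((w.2 w.1 : ℝ) : EReal)) ≤ (((w.2 p.1 + (inclusionInDoubleDual ℝ X w.1) p.2 : ℝ) : EReal)
      - conj (gT T) (w.2, inclusionInDoubleDual ℝ X w.1)) :=
    EReal.sub_le_sub le_rfl h2
  refine le_trans ?_ h3
  rw [← EReal.coe_sub]
  simp [NormedSpace.dual_def]

/-- coupling lower bound, using maximal monotonicity -/
lemma bigH_ge_coupling {T : Set (X × (X →L[ℝ] ℝ))} (hT : MaximalMonotone T)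
    (p : X × (X →L[ℝ] ℝ)) : ((p.2 p.1 : ℝ) : EReal) ≤ bigH T p := by
  by_contra hlt
  push_neg at hlt
  have key : ∀ w ∈ T, w.2 p.1 + p.2 w.1 - w.2 w.1 < p.2 p.1 := by
    intro w hw
    have := lt_of_le_of_lt (bigH_ge_fitz hT.1 hw p) hlt
    exact_mod_cast this
  have hS : MonotoneSet (insert p T) := by
    intro x hx y hy
    rcases Set.mem_insert_iff.1 hx with hx' | hx' <;>
      rcases Set.mem_insert_iff.1 hy with hy' | hy'
    · rw [hx', hy']; simp
    · rw [hx']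
      have := key y hy'
      simp only [ContinuousLinearMap.sub_apply, map_sub]
      nlinarith
    · rw [hy']
      have := key x hx'
      simp only [ContinuousLinearMap.sub_apply, map_sub]
      nlinarith
    · exact hT.1 x hx' y hy'
  have := hT.2 _ hS (Set.subset_insert _ _)
  have hpT : p ∈ T := this ▸ Set.mem_insert p T
  have := key p hpT
  linarith

/-- bigH below gT, hence coupling upper bound on T -/
lemma bigH_le_gT {T : Set (X × (X →L[ℝ] ℝ))} (hne : T.Nonempty)
    {p : X × (X →L[ℝ] ℝ)} (hp : p ∈ T) : bigH T p ≤ ((p.2 p.1 : ℝ) : EReal) := by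
  apply iSup_le
  intro q
  have h1 : (((q.1 p.1 + q.2 p.2 : ℝ) : EReal) - gT T p) ≤ conj (gT T) q :=
    le_iSup (fun r => (((q.1 r.1 + q.2 r.2 : ℝ) : EReal) - gT T r)) p
  simp only [gT] at h1
  rw [if_pos hp] at h1
  exact ereal_sub_swap _ (EReal.coe_ne_bot _) (conjgT_ne_bot hne q) h1

lemma bigH_convex (T : Set (X × (X →L[ℝ] ℝ))) (hne : T.Nonempty) :
    ConvexE (bigH T) := by
  intro p q a b ha hb hab
  apply iSup_le
  intro w
  obtain ⟨C, hC⟩ : ∃ C, conj (gT T) w = C := ⟨_, rfl⟩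
  rw [hC]
  induction C with
  | bot => exact absurd hC (conjgT_ne_bot hne w)
  | coe c =>
    have hterm : ∀ r : X × (X →L[ℝ] ℝ),
        ((w.1 r.1 + w.2 r.2 - c : ℝ) : EReal) ≤ bigH T r := by
      intro r
      have h1 : (((w.1 r.1 + w.2 r.2 : ℝ) : EReal) - conj (gT T) w) ≤ bigH T r :=
        le_iSup (fun v : (X →L[ℝ] ℝ) × ((X →L[ℝ] ℝ) →L[ℝ] ℝ) =>
          (((v.1 r.1 + v.2 r.2 : ℝ) : EReal) - conj (gT T) v)) w
      rwa [hC, ← EReal.coe_sub] at h1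
    rw [← EReal.coe_sub]
    have heq : (w.1 (a • p + b • q).1 + w.2 (a • p + b • q).2 - c : ℝ)
        = a * (w.1 p.1 + w.2 p.2 - c) + b * (w.1 q.1 + w.2 q.2 - c) := by
      simp only [Prod.fst_add, Prod.snd_add, Prod.smul_fst, Prod.smul_snd, map_add, map_smul,
        ContinuousLinearMap.add_apply, ContinuousLinearMap.smul_apply, smul_eq_mul]
      linear_combination c * hab
    rw [heq, EReal.coe_add, EReal.coe_mul, EReal.coe_mul]
    exact add_le_add (ereal_mul_mono a ha (hterm p)) (ereal_mul_mono b hb (hterm q))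
  | top =>
    rw [EReal.sub_top]
    exact bot_le

lemma bigH_lsc (T : Set (X × (X →L[ℝ] ℝ))) (hne : T.Nonempty) :
    LowerSemicontinuous (bigH T) := by
  apply lowerSemicontinuous_iSup
  intro w
  obtain ⟨C, hC⟩ : ∃ C, conj (gT T) w = C := ⟨_, rfl⟩
  induction C with
  | bot => exact absurd hC (conjgT_ne_bot hne w)
  | coe c =>
    have : (fun p : X × (X →L[ℝ] ℝ) => (((w.1 p.1 + w.2 p.2 : ℝ) : EReal) - conj (gT T) w))
        = fun p => ((w.1 p.1 + w.2 p.2 - c : ℝ) : EReal) := by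
      funext p
      rw [hC, ← EReal.coe_sub]
    rw [this]
    apply Continuous.lowerSemicontinuous
    apply EReal.continuous_coe_iff.2
    exact ((w.1.continuous.comp continuous_fst).add
      (w.2.continuous.comp continuous_snd)).sub continuous_const
  | top =>
    have : (fun p : X × (X →L[ℝ] ℝ) => (((w.1 p.1 + w.2 p.2 : ℝ) : EReal) - conj (gT T) w))
        = fun _ => (⊥ : EReal) := by
      funext p
      rw [hC, EReal.sub_top]
    rw [this]
    exact lowerSemicontinuous_const

lemma bigH_mem {T : Set (X × (X →L[ℝ] ℝ))} (hT : MaximalMonotone T) :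
    bigH T ∈ FitzFamily T := by
  have hne := nonempty_of_max hT
  refine ⟨bigH_convex T hne, bigH_lsc T hne, fun p => bigH_ge_coupling hT p, fun p hp => ?_⟩
  exact le_antisymm (bigH_le_gT hne hp) (bigH_ge_coupling hT p)

lemma conj_bigH_le {T : Set (X × (X →L[ℝ] ℝ))} (hT : MaximalMonotone T)
    (q : (X →L[ℝ] ℝ) × ((X →L[ℝ] ℝ) →L[ℝ] ℝ)) : conj (bigH T) q ≤ conj (gT T) q := by
  have hne := nonempty_of_max hT
  apply iSup_le
  intro p
  have h1 : (((q.1 p.1 + q.2 p.2 : ℝ) : EReal) - conj (gT T) q) ≤ bigH T p :=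
    le_iSup (fun v : (X →L[ℝ] ℝ) × ((X →L[ℝ] ℝ) →L[ℝ] ℝ) =>
      (((v.1 p.1 + v.2 p.2 : ℝ) : EReal) - conj (gT T) v)) q
  refine ereal_sub_swap _ (conjgT_ne_bot hne q) ?_ h1
  exact fun hb => by
    have := bigH_ge_coupling hT p
    rw [hb, le_bot_iff] at this
    exact EReal.coe_ne_bot _ this

end Stmt19

theorem stmt_19 {X : Type*} [NormedAddCommGroup X] [NormedSpace ℝ X] [CompleteSpace X]
    (T : Set (X × (X →L[ℝ] ℝ))) (hT : MaximalMonotone T)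
    (hall : ∀ h ∈ FitzFamily T,
      ∀ q : (X →L[ℝ] ℝ) × ((X →L[ℝ] ℝ) →L[ℝ] ℝ), (q.2 q.1 : EReal) ≤ conj h q) :
    TypeNI T := by
  intro q
  have hkey : ((q.2 q.1 : ℝ) : EReal) ≤ conj (Stmt19.gT T) q :=
    le_trans (hall _ (Stmt19.bigH_mem hT) q) (Stmt19.conj_bigH_le hT q)
  apply Stmt19.ereal_le_zero
  intro ε hε
  have hlt : ((q.2 q.1 - ε : ℝ) : EReal) < conj (Stmt19.gT T) q :=
    lt_of_lt_of_le (by exact_mod_cast sub_lt_self _ hε) hkey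
  rw [conj, lt_iSup_iff] at hlt
  obtain ⟨p, hp⟩ := hlt
  have hpT : p ∈ T := by
    by_contra hpT
    simp only [Stmt19.gT] at hp
    rw [if_neg hpT, EReal.sub_top] at hp
    exact absurd hp (by simp)
  simp only [Stmt19.gT] at hp
  rw [if_pos hpT, ← EReal.coe_sub, EReal.coe_lt_coe_iff] at hp
  have hle : (⨅ p : T, (((q.2 - inclusionInDoubleDual ℝ X p.1.1) (q.1 - p.1.2) : ℝ) : EReal))
      ≤ (((q.2 - inclusionInDoubleDual ℝ X p.1) (q.1 - p.2) : ℝ) : EReal) :=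
    iInf_le (fun r : T => (((q.2 - inclusionInDoubleDual ℝ X r.1.1) (q.1 - r.1.2) : ℝ) : EReal))
      ⟨p, hpT⟩
  refine le_trans hle ?_
  rw [EReal.coe_le_coe_iff]
  simp only [ContinuousLinearMap.sub_apply, map_sub, NormedSpace.dual_def]
  linarith

end
end
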